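/- arXiv:math/0701357 — 2 statements merged into one kernel-verified Lean document; each statement's English description precedes it below -/
import Mathlib

section
/- Let A be a prime nontrivial superalgebra over a commutative unital ring φ with 1/2 ∈ φ, let I be a nonzero proper ideal of A, and let U be a graded additive subgroup of A such that [U, I] ⊆ U (superbracket), u∘v ∈ Z for every u, v ∈ U₀, and u∘v = 0 for every u, v ∈ U₁. Assume moreover that [[[U,I],[U,I]], I] = 0. Then y₁u₁v₁w₁ ∈ Z for all y₁ ∈ I₁ and u₁, v₁, w₁ ∈ U₁ (i.e., I₁(U₁)³ ⊆ Z), and moreover either u₁v₁ = 0 for all u₁, v₁ ∈ U₁, or A is commutative. -/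
open DirectSum

/-- The sign `(−1)^{ij}` for degrees `i j : ZMod 2`. -/
def ssign (i j : ZMod 2) : ℤ := if i = 1 ∧ j = 1 then -1 else 1

variable {φ A : Type*}

section
variable [CommRing φ] [Ring A] [Algebra φ A]

/-- Superbracket `[x,y] = xy − (−1)^{ij} yx` of homogeneous elements of degrees `i`, `j`. -/
def sbr (i j : ZMod 2) (x y : A) : A := x * y - ssign i j • (y * x)

/-- Supercircle product `x∘y = xy + (−1)^{ij} yx` of homogeneous elements of degrees `i`, `j`. -/
def scirc (i j : ZMod 2) (x y : A) : A := x * y + ssign i j • (y * x)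

/-- A graded two-sided ideal of the superalgebra `A = ⨁ 𝒜 i`. -/
structure SuperIdeal (𝒜 : ZMod 2 → Submodule φ A) [GradedAlgebra 𝒜] where
  carrier : Submodule φ A
  mul_mem_left : ∀ (a x : A), x ∈ carrier → a * x ∈ carrier
  mul_mem_right : ∀ (a x : A), x ∈ carrier → x * a ∈ carrier
  graded' : ∀ (i : ZMod 2), ∀ x ∈ carrier, ((DirectSum.decompose 𝒜 x) i : A) ∈ carrier

variable (𝒜 : ZMod 2 → Submodule φ A)

/-- A superalgebra is prime if `I⬝J = 0` forces `I = 0` or `J = 0` for graded ideals `I`, `J`. -/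
def SuperPrime [GradedAlgebra 𝒜] : Prop :=
  ∀ I J : SuperIdeal 𝒜, (∀ x ∈ I.carrier, ∀ y ∈ J.carrier, x * y = 0) →
    I.carrier = ⊥ ∨ J.carrier = ⊥

/-- A superalgebra is semiprime if it has no nonzero graded ideal of square zero. -/
def SuperSemiprime [GradedAlgebra 𝒜] : Prop :=
  ∀ I : SuperIdeal 𝒜, (∀ x ∈ I.carrier, ∀ y ∈ I.carrier, x * y = 0) → I.carrier = ⊥

/-- `Z`, the even part of the center of `A`. -/
def evenCenter : Set A := {z : A | z ∈ 𝒜 0 ∧ ∀ x : A, z * x = x * z}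

/-- A subset `M` of `A` is dense if the (non-unital) subalgebra of `A` generated by `M`
contains a nonzero ideal of `A`. -/
def IsDenseIn [GradedAlgebra 𝒜] (M : Set A) : Prop :=
  ∃ J : SuperIdeal 𝒜, J.carrier ≠ ⊥ ∧
    (J.carrier : Set A) ⊆ NonUnitalAlgebra.adjoin φ M

/-- A superinvolution on the superalgebra `A`. -/
structure Superinvolution (𝒜 : ZMod 2 → Submodule φ A) where
  toFun : A →ₗ[φ] A
  grading : ∀ (i : ZMod 2), ∀ x ∈ 𝒜 i, toFun x ∈ 𝒜 i
  invol : ∀ x : A, toFun (toFun x) = x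
  mul_rev : ∀ (i j : ZMod 2), ∀ x ∈ 𝒜 i, ∀ y ∈ 𝒜 j,
    toFun (x * y) = ssign i j • (toFun y * toFun x)

/-- A Lie ideal of the Lie superalgebra `K` of skew elements of `(A,*)`: a graded
`φ`-submodule of `K` with `[U,K] ⊆ U`. -/
structure LieIdealOfSkew [GradedAlgebra 𝒜] (σ : Superinvolution 𝒜) where
  carrier : Submodule φ A
  skew : ∀ x ∈ carrier, σ.toFun x = -x
  graded' : ∀ (i : ZMod 2), ∀ x ∈ carrier, ((DirectSum.decompose 𝒜 x) i : A) ∈ carrier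
  bracket_mem : ∀ (i j : ZMod 2) (u k : A), u ∈ carrier → u ∈ 𝒜 i →
    k ∈ 𝒜 j → σ.toFun k = -k → sbr i j u k ∈ carrier

/-- The additive span of superbrackets of homogeneous elements of `S` and `T`. -/
def superBrAdd (S T : Set A) : AddSubgroup A :=
  AddSubgroup.closure
    {z : A | ∃ (i j : ZMod 2) (x y : A), x ∈ S ∧ x ∈ 𝒜 i ∧ y ∈ T ∧ y ∈ 𝒜 j ∧ z = sbr i j x y}

/-- The `φ`-submodule spanned by superbrackets of homogeneous elements of `S` and `T`. -/
def superBrSpan (S T : Set A) : Submodule φ A :=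
  Submodule.span φ
    {z : A | ∃ (i j : ZMod 2) (x y : A), x ∈ S ∧ x ∈ 𝒜 i ∧ y ∈ T ∧ y ∈ 𝒜 j ∧ z = sbr i j x y}

end

/-- Data exhibiting the prime superalgebra `A` as a central order in a simple superalgebra `B`
that is 4-dimensional over its center. -/
structure CentralOrderIn4DimSimple (φ : Type*) [CommRing φ] {A : Type*} [Ring A] [Algebra φ A]
    (𝒜 : ZMod 2 → Submodule φ A) [GradedAlgebra 𝒜] where
  B : Type
  [ringB : Ring B]
  [algB : Algebra φ B]
  ℬ : ZMod 2 → Submodule φ B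
  [gradedB : GradedAlgebra ℬ]
  ι : A →ₐ[φ] B
  inj : Function.Injective ι
  grading : ∀ (i : ZMod 2), ∀ x ∈ 𝒜 i, ι x ∈ ℬ i
  central_unit : ∀ z ∈ evenCenter 𝒜, z ≠ 0 → IsUnit (ι z)
  localized : ∀ b : B, ∃ z a : A, z ∈ evenCenter 𝒜 ∧ z ≠ 0 ∧ ι z * b = ι a
  sq_ne_zero : ∃ x y : B, x * y ≠ 0
  simple : ∀ J : SuperIdeal ℬ, J.carrier = ⊥ ∨ J.carrier = ⊤
  dim4 : Module.finrank (Subring.center B) B = 4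

section SFFHelpers

open DirectSum

variable {φ A : Type*} [CommRing φ] [Ring A] [Algebra φ A]

private lemma sff_zmod2 (i : ZMod 2) : i = 0 ∨ i = 1 := by revert i; decide

private lemma sff_ssign_one {i j : ZMod 2} (h : ¬(i = 1 ∧ j = 1)) : ssign i j = 1 := if_neg h

private lemma sff_ssign_neg : ssign 1 1 = -1 := if_pos ⟨rfl, rfl⟩

private lemma sff_sbr00 (x y : A) : sbr 0 0 x y = x * y - y * x := by
  rw [sbr, sff_ssign_one (by decide), one_zsmul]

private lemma sff_sbr10 (x y : A) : sbr 1 0 x y = x * y - y * x := by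
  rw [sbr, sff_ssign_one (by decide), one_zsmul]

private lemma sff_sbr01 (x y : A) : sbr 0 1 x y = x * y - y * x := by
  rw [sbr, sff_ssign_one (by decide), one_zsmul]

private lemma sff_sbr11 (x y : A) : sbr 1 1 x y = x * y + y * x := by
  rw [sbr, sff_ssign_neg, neg_zsmul, one_zsmul, sub_neg_eq_add]

private lemma sff_scirc00 (x y : A) : scirc 0 0 x y = x * y + y * x := by
  rw [scirc, sff_ssign_one (by decide), one_zsmul]

private lemma sff_scirc11 (x y : A) : scirc 1 1 x y = x * y - y * x := by
  rw [scirc, sff_ssign_neg, neg_zsmul, one_zsmul, ← sub_eq_add_neg]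

private lemma sff_two_cancel [Invertible (2:φ)] {a : A} (h : a + a = 0) : a = 0 := by
  have h2 : (2 : φ) • a = 0 := by rw [two_smul]; exact h
  have h3 : ((⅟2 : φ) * 2) • a = 0 := by rw [mul_smul, h2, smul_zero]
  rwa [invOf_mul_self, one_smul] at h3

variable (𝒜 : ZMod 2 → Submodule φ A) [GradedAlgebra 𝒜]

private lemma sff_mem_zero_one {x : A} (h0 : x ∈ 𝒜 0) (h1 : x ∈ 𝒜 1) : x = 0 := by
  have e0 : ((decompose 𝒜 x) 0 : A) = x := decompose_of_mem_same 𝒜 h0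
  have e1 : ((decompose 𝒜 x) 0 : A) = 0 := decompose_of_mem_ne 𝒜 h1 (by decide)
  rw [e0] at e1; exact e1

private lemma sff_decomp_two (x : A) :
    x = ((decompose 𝒜 x) 0 : A) + ((decompose 𝒜 x) 1 : A) := by
  classical
  have h2 : (∑ i ∈ DFinsupp.support ((decompose 𝒜) x), ((decompose 𝒜 x) i : A))
      = ∑ i : ZMod 2, ((decompose 𝒜 x) i : A) :=
    Finset.sum_subset (Finset.subset_univ _) (by
      intro i _ hi
      rw [DFinsupp.notMem_support_iff.mp hi, ZeroMemClass.coe_zero])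
  have h3 : (∑ i : ZMod 2, ((decompose 𝒜 x) i : A))
      = ((decompose 𝒜 x) 0 : A) + ((decompose 𝒜 x) 1 : A) := by
    rw [show (Finset.univ : Finset (ZMod 2)) = {0, 1} by decide]
    rw [Finset.sum_insert (by decide), Finset.sum_singleton]
  conv_lhs => rw [← DirectSum.sum_support_decompose 𝒜 x]
  rw [h2, h3]

private lemma sff_mul_mem {i j : ZMod 2} {x y : A} (hx : x ∈ 𝒜 i) (hy : y ∈ 𝒜 j)
    {k : ZMod 2} (hk : i + j = k) : x * y ∈ 𝒜 k := hk ▸ SetLike.mul_mem_graded hx hy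

private lemma sff_pair_zero {a b : A} (ha : a ∈ 𝒜 0) (hb : b ∈ 𝒜 1) (h : a + b = 0) :
    a = 0 ∧ b = 0 := by
  have hab : a = -b := eq_neg_of_add_eq_zero_left h
  have ha1 : a ∈ 𝒜 1 := hab ▸ neg_mem hb
  have ha0 : a = 0 := sff_mem_zero_one 𝒜 ha ha1
  refine ⟨ha0, ?_⟩
  rw [ha0, zero_add] at h; exact h

-- even center lemmas
private lemma sff_ec_zero : (0 : A) ∈ evenCenter 𝒜 :=
  ⟨zero_mem _, fun x => by rw [zero_mul, mul_zero]⟩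

private lemma sff_ec_add {a b : A} (ha : a ∈ evenCenter 𝒜) (hb : b ∈ evenCenter 𝒜) :
    a + b ∈ evenCenter 𝒜 :=
  ⟨add_mem ha.1 hb.1, fun x => by rw [add_mul, mul_add, ha.2 x, hb.2 x]⟩

private lemma sff_ec_neg {a : A} (ha : a ∈ evenCenter 𝒜) : -a ∈ evenCenter 𝒜 :=
  ⟨neg_mem ha.1, fun x => by rw [neg_mul, mul_neg, ha.2 x]⟩

private lemma sff_ec_smul (r : φ) {a : A} (ha : a ∈ evenCenter 𝒜) : r • a ∈ evenCenter 𝒜 :=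
  ⟨Submodule.smul_mem _ r ha.1, fun x => by rw [smul_mul_assoc, mul_smul_comm, ha.2 x]⟩

-- move a central element inward
private lemma sff_cl {z : A} (hz : ∀ t : A, z * t = t * z) (a X : A) :
    z * (a * X) = a * (z * X) := by
  rw [← mul_assoc, hz a, mul_assoc]

/-- Construct a `SuperIdeal` from a set of homogeneous generators that absorbs
multiplication by homogeneous elements. -/
private def sffMk (G : Set A) (hhom : ∀ g ∈ G, ∃ i, g ∈ 𝒜 i)
    (hl : ∀ (i : ZMod 2), ∀ a ∈ 𝒜 i, ∀ g ∈ G, a * g ∈ Submodule.span φ G)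
    (hr : ∀ (i : ZMod 2), ∀ a ∈ 𝒜 i, ∀ g ∈ G, g * a ∈ Submodule.span φ G) :
    SuperIdeal 𝒜 where
  carrier := Submodule.span φ G
  mul_mem_left := by
    have key : ∀ (i : ZMod 2) (a : A), a ∈ 𝒜 i → ∀ x ∈ Submodule.span φ G,
        a * x ∈ Submodule.span φ G := by
      intro i a ha x hx
      induction hx using Submodule.span_induction with
      | mem g hg => exact hl i a ha g hg
      | zero => rw [mul_zero]; exact zero_mem _
      | add u v hu hv ihu ihv => rw [mul_add]; exact add_mem ihu ihv
      | smul r u hu ih => rw [mul_smul_comm]; exact Submodule.smul_mem _ _ ih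
    intro a x hx
    have ha : a * x = ((decompose 𝒜 a) 0 : A) * x + ((decompose 𝒜 a) 1 : A) * x := by
      rw [← add_mul, ← sff_decomp_two 𝒜 a]
    rw [ha]
    exact add_mem (key 0 _ (SetLike.coe_mem _) x hx) (key 1 _ (SetLike.coe_mem _) x hx)
  mul_mem_right := by
    have key : ∀ (i : ZMod 2) (a : A), a ∈ 𝒜 i → ∀ x ∈ Submodule.span φ G,
        x * a ∈ Submodule.span φ G := by
      intro i a ha x hx
      induction hx using Submodule.span_induction with
      | mem g hg => exact hr i a ha g hg
      | zero => rw [zero_mul]; exact zero_mem _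
      | add u v hu hv ihu ihv => rw [add_mul]; exact add_mem ihu ihv
      | smul r u hu ih => rw [smul_mul_assoc]; exact Submodule.smul_mem _ _ ih
    intro a x hx
    have ha : x * a = x * ((decompose 𝒜 a) 0 : A) + x * ((decompose 𝒜 a) 1 : A) := by
      rw [← mul_add, ← sff_decomp_two 𝒜 a]
    rw [ha]
    exact add_mem (key 0 _ (SetLike.coe_mem _) x hx) (key 1 _ (SetLike.coe_mem _) x hx)
  graded' := by
    intro i x hx
    induction hx using Submodule.span_induction with
    | mem g hg =>
      obtain ⟨j, hj⟩ := hhom g hg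
      by_cases h : j = i
      · subst h
        rw [decompose_of_mem_same 𝒜 hj]
        exact Submodule.subset_span hg
      · rw [decompose_of_mem_ne 𝒜 hj h]
        exact zero_mem _
    | zero => simp
    | add u v hu hv ihu ihv =>
      have : ((decompose 𝒜 (u + v)) i : A)
          = ((decompose 𝒜 u) i : A) + ((decompose 𝒜 v) i : A) := by
        rw [decompose_add]; rfl
      rw [this]; exact add_mem ihu ihv
    | smul r u hu ih =>
      have : ((decompose 𝒜 (r • u)) i : A) = r • ((decompose 𝒜 u) i : A) := by
        rw [decompose_smul]; rfl
      rw [this]; exact Submodule.smul_mem _ _ ih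

/-- The graded two sided ideal generated by a homogeneous element. -/
private def sffSand {k : ZMod 2} {c : A} (hc : c ∈ 𝒜 k) : SuperIdeal 𝒜 :=
  sffMk 𝒜 {z | ∃ (i j : ZMod 2) (x y : A), x ∈ 𝒜 i ∧ y ∈ 𝒜 j ∧ z = x * c * y}
    (by rintro g ⟨i, j, x, y, hx, hy, rfl⟩
        exact ⟨i + k + j, SetLike.mul_mem_graded (SetLike.mul_mem_graded hx hc) hy⟩)
    (by rintro l a ha g ⟨i, j, x, y, hx, hy, rfl⟩
        refine Submodule.subset_span ⟨l + i, j, a * x, y, SetLike.mul_mem_graded ha hx, hy, ?_⟩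
        rw [← mul_assoc, ← mul_assoc])
    (by rintro l a ha g ⟨i, j, x, y, hx, hy, rfl⟩
        refine Submodule.subset_span ⟨i, j + l, x, y * a, hx, SetLike.mul_mem_graded hy ha, ?_⟩
        exact mul_assoc _ _ _)

private lemma sff_mem_sand {k : ZMod 2} {c : A} (hc : c ∈ 𝒜 k) :
    c ∈ (sffSand 𝒜 hc).carrier :=
  Submodule.subset_span ⟨0, 0, 1, 1, SetLike.one_mem_graded _, SetLike.one_mem_graded _,
    by rw [one_mul, mul_one]⟩

private def sffSandAI (I : SuperIdeal 𝒜) {k : ZMod 2} {c : A} (hc : c ∈ 𝒜 k) : SuperIdeal 𝒜 :=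
  sffMk 𝒜 {z | ∃ (i j : ZMod 2) (x y : A), x ∈ 𝒜 i ∧ y ∈ I.carrier ∧ y ∈ 𝒜 j ∧ z = x * c * y}
    (by rintro g ⟨i, j, x, y, hx, hyI, hy, rfl⟩
        exact ⟨i + k + j, SetLike.mul_mem_graded (SetLike.mul_mem_graded hx hc) hy⟩)
    (by rintro l a ha g ⟨i, j, x, y, hx, hyI, hy, rfl⟩
        refine Submodule.subset_span
          ⟨l + i, j, a * x, y, SetLike.mul_mem_graded ha hx, hyI, hy, ?_⟩
        rw [← mul_assoc, ← mul_assoc])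
    (by rintro l a ha g ⟨i, j, x, y, hx, hyI, hy, rfl⟩
        refine Submodule.subset_span
          ⟨i, j + l, x, y * a, hx, I.mul_mem_right a y hyI, SetLike.mul_mem_graded hy ha, ?_⟩
        exact mul_assoc _ _ _)

private def sffSandII (I : SuperIdeal 𝒜) {k : ZMod 2} {c : A} (hc : c ∈ 𝒜 k) : SuperIdeal 𝒜 :=
  sffMk 𝒜 {z | ∃ (i j : ZMod 2) (x y : A),
      x ∈ I.carrier ∧ x ∈ 𝒜 i ∧ y ∈ I.carrier ∧ y ∈ 𝒜 j ∧ z = x * c * y}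
    (by rintro g ⟨i, j, x, y, hxI, hx, hyI, hy, rfl⟩
        exact ⟨i + k + j, SetLike.mul_mem_graded (SetLike.mul_mem_graded hx hc) hy⟩)
    (by rintro l a ha g ⟨i, j, x, y, hxI, hx, hyI, hy, rfl⟩
        refine Submodule.subset_span ⟨l + i, j, a * x, y, I.mul_mem_left a x hxI,
          SetLike.mul_mem_graded ha hx, hyI, hy, ?_⟩
        rw [← mul_assoc, ← mul_assoc])
    (by rintro l a ha g ⟨i, j, x, y, hxI, hx, hyI, hy, rfl⟩
        refine Submodule.subset_span ⟨i, j + l, x, y * a, hxI, hx,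
          I.mul_mem_right a y hyI, SetLike.mul_mem_graded hy ha, ?_⟩
        exact mul_assoc _ _ _)

private def sffZIdeal {z : A} (hz : z ∈ evenCenter 𝒜) : SuperIdeal 𝒜 :=
  sffMk 𝒜 {w | ∃ (i : ZMod 2) (a : A), a ∈ 𝒜 i ∧ w = z * a}
    (by rintro g ⟨i, a, ha, rfl⟩
        exact ⟨0 + i, SetLike.mul_mem_graded hz.1 ha⟩)
    (by rintro l b hb g ⟨i, a, ha, rfl⟩
        refine Submodule.subset_span ⟨l + i, b * a, SetLike.mul_mem_graded hb ha, ?_⟩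
        rw [← mul_assoc, ← hz.2 b, mul_assoc])
    (by rintro l b hb g ⟨i, a, ha, rfl⟩
        refine Submodule.subset_span ⟨i + l, a * b, SetLike.mul_mem_graded ha hb, ?_⟩
        exact mul_assoc _ _ _)

private lemma sff_mem_zideal {z : A} (hz : z ∈ evenCenter 𝒜) :
    z ∈ (sffZIdeal 𝒜 hz).carrier :=
  Submodule.subset_span ⟨0, 1, SetLike.one_mem_graded _, (mul_one z).symm⟩

end SFFHelpers
section SFFPrime

open DirectSum

set_option linter.unusedSectionVars false

variable {φ A : Type*} [CommRing φ] [Ring A] [Algebra φ A]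
variable (𝒜 : ZMod 2 → Submodule φ A) [GradedAlgebra 𝒜]

/-- P1: left annihilator of a nonzero ideal is zero (homogeneous case). -/
private lemma sff_left_ann (hprime : SuperPrime 𝒜) (I : SuperIdeal 𝒜) (hIne : I.carrier ≠ ⊥)
    {k : ZMod 2} {c : A} (hc : c ∈ 𝒜 k) (h : ∀ y ∈ I.carrier, c * y = 0) : c = 0 := by
  have hz : ∀ x ∈ (sffSand 𝒜 hc).carrier, ∀ y ∈ I.carrier, x * y = 0 := by
    intro x hx
    induction hx using Submodule.span_induction with
    | mem g hg =>
      obtain ⟨i, j, x', y', hx', hy', rfl⟩ := hg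
      intro y hy
      have h1 : y' * y ∈ I.carrier := I.mul_mem_left y' y hy
      calc (x' * c * y') * y = x' * (c * (y' * y)) := by rw [mul_assoc, mul_assoc]
      _ = x' * 0 := by rw [h _ h1]
      _ = 0 := mul_zero _
    | zero => intro y _; rw [zero_mul]
    | add u v _ _ ihu ihv => intro y hy; rw [add_mul, ihu y hy, ihv y hy, add_zero]
    | smul r u _ ih => intro y hy; rw [smul_mul_assoc, ih y hy, smul_zero]
  rcases hprime _ I hz with hJ | hI
  · have hm := sff_mem_sand 𝒜 hc
    rw [hJ] at hm
    simpa using hm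
  · exact absurd hI hIne

/-- P2: right annihilator of a nonzero ideal is zero (homogeneous case). -/
private lemma sff_right_ann (hprime : SuperPrime 𝒜) (I : SuperIdeal 𝒜) (hIne : I.carrier ≠ ⊥)
    {k : ZMod 2} {c : A} (hc : c ∈ 𝒜 k) (h : ∀ y ∈ I.carrier, y * c = 0) : c = 0 := by
  have hz : ∀ x ∈ I.carrier, ∀ y ∈ (sffSand 𝒜 hc).carrier, x * y = 0 := by
    intro x hxI y hy
    induction hy using Submodule.span_induction with
    | mem g hg =>
      obtain ⟨i, j, x', y', hx', hy', rfl⟩ := hg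
      have h1 : x * x' ∈ I.carrier := I.mul_mem_right x' x hxI
      calc x * (x' * c * y') = ((x * x') * c) * y' := by rw [← mul_assoc, ← mul_assoc]
      _ = 0 * y' := by rw [h _ h1]
      _ = 0 := zero_mul _
    | zero => rw [mul_zero]
    | add u v _ _ ihu ihv => rw [mul_add, ihu, ihv, add_zero]
    | smul r u _ ih => rw [mul_smul_comm, ih, smul_zero]
  rcases hprime I _ hz with hI | hJ
  · exact absurd hI hIne
  · have hm := sff_mem_sand 𝒜 hc
    rw [hJ] at hm
    simpa using hm

/-- Full sandwich: `cAc = 0` forces `c = 0` for homogeneous `c`. -/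
private lemma sff_full_sandwich (hprime : SuperPrime 𝒜)
    {k : ZMod 2} {c : A} (hc : c ∈ 𝒜 k) (h : ∀ m : A, c * m * c = 0) : c = 0 := by
  have hz : ∀ x ∈ (sffSand 𝒜 hc).carrier, ∀ y ∈ (sffSand 𝒜 hc).carrier, x * y = 0 := by
    intro x hx
    induction hx using Submodule.span_induction with
    | mem g hg =>
      obtain ⟨i, j, x1, y1, hx1, hy1, rfl⟩ := hg
      intro y hy
      induction hy using Submodule.span_induction with
      | mem g' hg' =>
        obtain ⟨i', j', x2, y2, hx2, hy2, rfl⟩ := hg'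
        have e : (x1 * c * y1) * (x2 * c * y2) = x1 * (c * (y1 * x2) * c) * y2 := by
          simp only [mul_assoc]
        rw [e, h (y1 * x2), mul_zero, zero_mul]
      | zero => rw [mul_zero]
      | add u v _ _ ihu ihv => rw [mul_add, ihu, ihv, add_zero]
      | smul r u _ ih => rw [mul_smul_comm, ih, smul_zero]
    | zero => intro y _; rw [zero_mul]
    | add u v _ _ ihu ihv => intro y hy; rw [add_mul, ihu y hy, ihv y hy, add_zero]
    | smul r u _ ih => intro y hy; rw [smul_mul_assoc, ih y hy, smul_zero]
  rcases hprime _ _ hz with hJ | hJ <;>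
  · have hm := sff_mem_sand 𝒜 hc
    rw [hJ] at hm
    simpa using hm

/-- A homogeneous central element of square zero vanishes. -/
private lemma sff_central_sq (hprime : SuperPrime 𝒜)
    {k : ZMod 2} {c : A} (hc : c ∈ 𝒜 k) (hcen : ∀ t : A, c * t = t * c)
    (hsq : c * c = 0) : c = 0 :=
  sff_full_sandwich 𝒜 hprime hc
    (fun m => by rw [hcen m, mul_assoc, hsq, mul_zero])

/-- A nonzero element of the even center is not a left zero divisor. -/
private lemma sff_z_nzd (hprime : SuperPrime 𝒜) {z : A} (hz : z ∈ evenCenter 𝒜)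
    (hz0 : z ≠ 0) {m : A} (h : z * m = 0) : m = 0 := by
  have hcomp : ∀ (i : ZMod 2) (mi : A), mi ∈ 𝒜 i → z * mi = 0 → mi = 0 := by
    intro i mi hmi hzmi
    have hzz : ∀ x ∈ (sffZIdeal 𝒜 hz).carrier, ∀ y ∈ (sffSand 𝒜 hmi).carrier, x * y = 0 := by
      intro x hx
      induction hx using Submodule.span_induction with
      | mem g hg =>
        obtain ⟨l, a, ha, rfl⟩ := hg
        intro y hy
        induction hy using Submodule.span_induction with
        | mem g' hg' =>
          obtain ⟨i', j', x', y', hx', hy', rfl⟩ := hg'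
          have e : (z * a) * (x' * mi * y') = z * (a * (x' * (mi * y'))) := by
            simp only [mul_assoc]
          rw [e, sff_cl hz.2, sff_cl hz.2, ← mul_assoc z mi y', hzmi, zero_mul,
            mul_zero, mul_zero]
        | zero => rw [mul_zero]
        | add u v _ _ ihu ihv => rw [mul_add, ihu, ihv, add_zero]
        | smul r u _ ih => rw [mul_smul_comm, ih, smul_zero]
      | zero => intro y _; rw [zero_mul]
      | add u v _ _ ihu ihv => intro y hy; rw [add_mul, ihu y hy, ihv y hy, add_zero]
      | smul r u _ ih => intro y hy; rw [smul_mul_assoc, ih y hy, smul_zero]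
    rcases hprime _ _ hzz with hJ | hJ
    · have hm := sff_mem_zideal 𝒜 hz
      rw [hJ] at hm
      exact absurd (by simpa using hm) hz0
    · have hm := sff_mem_sand 𝒜 hmi
      rw [hJ] at hm
      simpa using hm
  have hsum : z * ((decompose 𝒜 m) 0 : A) + z * ((decompose 𝒜 m) 1 : A) = 0 := by
    rw [← mul_add, ← sff_decomp_two 𝒜 m, h]
  have hp := sff_pair_zero 𝒜
    (sff_mul_mem 𝒜 hz.1 (SetLike.coe_mem _) (by decide))
    (sff_mul_mem 𝒜 hz.1 (SetLike.coe_mem _) (by decide)) hsum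
  have h0 : ((decompose 𝒜 m) 0 : A) = 0 := hcomp 0 _ (SetLike.coe_mem _) hp.1
  have h1 : ((decompose 𝒜 m) 1 : A) = 0 := hcomp 1 _ (SetLike.coe_mem _) hp.2
  rw [sff_decomp_two 𝒜 m, h0, h1, add_zero]

/-- P3: `cIc = 0` forces `c = 0` for homogeneous `c` and a nonzero ideal `I`. -/
private lemma sff_I_sandwich (hprime : SuperPrime 𝒜) (I : SuperIdeal 𝒜) (hIne : I.carrier ≠ ⊥)
    {k : ZMod 2} {c : A} (hc : c ∈ 𝒜 k) (h : ∀ y ∈ I.carrier, c * y * c = 0) : c = 0 := by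
  -- first: I c I = 0
  have hK : ∀ x ∈ (sffSandII 𝒜 I hc).carrier, ∀ y ∈ (sffSandII 𝒜 I hc).carrier, x * y = 0 := by
    intro x hx
    induction hx using Submodule.span_induction with
    | mem g hg =>
      obtain ⟨i, j, x1, y1, hx1I, hx1, hy1I, hy1, rfl⟩ := hg
      intro y hy
      induction hy using Submodule.span_induction with
      | mem g' hg' =>
        obtain ⟨i', j', x2, y2, hx2I, hx2, hy2I, hy2, rfl⟩ := hg'
        have e : (x1 * c * y1) * (x2 * c * y2) = x1 * (c * (y1 * x2) * c) * y2 := by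
          simp only [mul_assoc]
        rw [e, h (y1 * x2) (I.mul_mem_right x2 y1 hy1I), mul_zero, zero_mul]
      | zero => rw [mul_zero]
      | add u v _ _ ihu ihv => rw [mul_add, ihu, ihv, add_zero]
      | smul r u _ ih => rw [mul_smul_comm, ih, smul_zero]
    | zero => intro y _; rw [zero_mul]
    | add u v _ _ ihu ihv => intro y hy; rw [add_mul, ihu y hy, ihv y hy, add_zero]
    | smul r u _ ih => intro y hy; rw [smul_mul_assoc, ih y hy, smul_zero]
  have hKbot : (sffSandII 𝒜 I hc).carrier = ⊥ := by
    rcases hprime _ _ hK with hJ | hJ <;> exact hJ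
  -- hence x c y = 0 for homogeneous x y ∈ I, hence for all x ∈ I, homogeneous y ∈ I
  have hIcI : ∀ x ∈ I.carrier, ∀ (j : ZMod 2), ∀ y ∈ I.carrier, y ∈ 𝒜 j → x * c * y = 0 := by
    intro x hxI j y hyI hyj
    have hhom : ∀ (i : ZMod 2) (x' : A), x' ∈ I.carrier → x' ∈ 𝒜 i → x' * c * y = 0 := by
      intro i x' hx'I hx'i
      have : x' * c * y ∈ (sffSandII 𝒜 I hc).carrier :=
        Submodule.subset_span ⟨i, j, x', y, hx'I, hx'i, hyI, hyj, rfl⟩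
      rw [hKbot] at this
      simpa using this
    have e : x * c * y = ((decompose 𝒜 x) 0 : A) * c * y + ((decompose 𝒜 x) 1 : A) * c * y := by
      rw [← add_mul, ← add_mul, ← sff_decomp_two 𝒜 x]
    rw [e, hhom 0 _ (I.graded' 0 x hxI) (SetLike.coe_mem _),
      hhom 1 _ (I.graded' 1 x hxI) (SetLike.coe_mem _), add_zero]
  -- now I * (A c I) = 0
  have hM : ∀ x ∈ I.carrier, ∀ y ∈ (sffSandAI 𝒜 I hc).carrier, x * y = 0 := by
    intro x hxI y hy
    induction hy using Submodule.span_induction with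
    | mem g hg =>
      obtain ⟨i, j, x', y', hx', hy'I, hy', rfl⟩ := hg
      calc x * (x' * c * y') = ((x * x') * c) * y' := by
            rw [← mul_assoc, ← mul_assoc]
      _ = 0 := by rw [hIcI (x * x') (I.mul_mem_right x' x hxI) j y' hy'I hy']
    | zero => rw [mul_zero]
    | add u v _ _ ihu ihv => rw [mul_add, ihu, ihv, add_zero]
    | smul r u _ ih => rw [mul_smul_comm, ih, smul_zero]
  have hMbot : (sffSandAI 𝒜 I hc).carrier = ⊥ := by
    rcases hprime _ _ hM with hJ | hJ
    · exact absurd hJ hIne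
    · exact hJ
  -- hence c y = 0 for homogeneous y ∈ I, hence c I = 0
  have hcI : ∀ y ∈ I.carrier, c * y = 0 := by
    intro y hyI
    have hhom : ∀ (j : ZMod 2) (y' : A), y' ∈ I.carrier → y' ∈ 𝒜 j → c * y' = 0 := by
      intro j y' hy'I hy'j
      have : 1 * c * y' ∈ (sffSandAI 𝒜 I hc).carrier :=
        Submodule.subset_span ⟨0, j, 1, y', SetLike.one_mem_graded _, hy'I, hy'j, rfl⟩
      rw [hMbot] at this
      have h2 : 1 * c * y' = 0 := by simpa using this
      rwa [one_mul] at h2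
    have e : c * y = c * ((decompose 𝒜 y) 0 : A) + c * ((decompose 𝒜 y) 1 : A) := by
      rw [← mul_add, ← sff_decomp_two 𝒜 y]
    rw [e, hhom 0 _ (I.graded' 0 y hyI) (SetLike.coe_mem _),
      hhom 1 _ (I.graded' 1 y hyI) (SetLike.coe_mem _), add_zero]
  exact sff_left_ann 𝒜 hprime I hIne hc hcI

/-- P6: an even element commuting with a nonzero ideal is in the even center. -/
private lemma sff_even_centralizer (hprime : SuperPrime 𝒜) (I : SuperIdeal 𝒜)
    (hIne : I.carrier ≠ ⊥) {a : A} (ha : a ∈ 𝒜 0)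
    (h : ∀ y ∈ I.carrier, a * y = y * a) : a ∈ evenCenter 𝒜 := by
  have key : ∀ (k : ZMod 2), ∀ r ∈ 𝒜 k, a * r = r * a := by
    intro k r hr
    have hann : ∀ y ∈ I.carrier, (a * r - r * a) * y = 0 := by
      intro y hy
      have h1 : a * (r * y) = (r * y) * a := h _ (I.mul_mem_left r y hy)
      have h2 : a * y = y * a := h y hy
      rw [sub_mul, mul_assoc, mul_assoc, h1, h2, ← mul_assoc, sub_self]
    have hhom : a * r - r * a ∈ 𝒜 k :=
      sub_mem (sff_mul_mem 𝒜 ha hr (zero_add k)) (sff_mul_mem 𝒜 hr ha (add_zero k))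
    have := sff_left_ann 𝒜 hprime I hIne hhom hann
    exact sub_eq_zero.mp this
  refine ⟨ha, fun x => ?_⟩
  have e : a * x = a * ((decompose 𝒜 x) 0 : A) + a * ((decompose 𝒜 x) 1 : A) := by
    rw [← mul_add, ← sff_decomp_two 𝒜 x]
  rw [e, key 0 _ (SetLike.coe_mem _), key 1 _ (SetLike.coe_mem _), ← add_mul,
    ← sff_decomp_two 𝒜 x]

/-- Reduce an annihilation statement to homogeneous elements of `I`. -/
private lemma sff_ann_of_parts (I : SuperIdeal 𝒜) {c : A}
    (hpart : ∀ (j : ZMod 2), ∀ y ∈ I.carrier, y ∈ 𝒜 j → c * y = 0) :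
    ∀ y ∈ I.carrier, c * y = 0 := by
  intro y hy
  have e : c * y = c * ((decompose 𝒜 y) 0 : A) + c * ((decompose 𝒜 y) 1 : A) := by
    rw [← mul_add, ← sff_decomp_two 𝒜 y]
  rw [e, hpart 0 _ (I.graded' 0 y hy) (SetLike.coe_mem _),
    hpart 1 _ (I.graded' 1 y hy) (SetLike.coe_mem _), add_zero]

/-- P7: an odd element supercommuting with a nonzero ideal vanishes. -/
private lemma sff_odd_supercentral [Invertible (2:φ)] (hprime : SuperPrime 𝒜)
    (I : SuperIdeal 𝒜) (hIne : I.carrier ≠ ⊥) {c : A} (hc : c ∈ 𝒜 1)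
    (h0 : ∀ y ∈ I.carrier, y ∈ 𝒜 0 → c * y = y * c)
    (h1 : ∀ y ∈ I.carrier, y ∈ 𝒜 1 → c * y + y * c = 0) : c = 0 := by
  have key0 : ∀ r ∈ 𝒜 0, c * r = r * c := by
    intro r hr
    have hann : ∀ (j : ZMod 2), ∀ y ∈ I.carrier, y ∈ 𝒜 j → (c * r - r * c) * y = 0 := by
      intro j y hyI hyj
      rcases sff_zmod2 j with rfl | rfl
      · have hry : c * (r * y) = (r * y) * c :=
          h0 _ (I.mul_mem_left r y hyI) (sff_mul_mem 𝒜 hr hyj (by decide))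
        have hcy : c * y = y * c := h0 y hyI hyj
        rw [sub_mul, mul_assoc, mul_assoc, hry, hcy, ← mul_assoc, sub_self]
      · have hry : c * (r * y) = -((r * y) * c) :=
          eq_neg_of_add_eq_zero_left
            (h1 _ (I.mul_mem_left r y hyI) (sff_mul_mem 𝒜 hr hyj (by decide)))
        have hcy : c * y = -(y * c) := eq_neg_of_add_eq_zero_left (h1 y hyI hyj)
        rw [sub_mul, mul_assoc, mul_assoc, hry, hcy, mul_neg, sub_neg_eq_add, mul_assoc,
          neg_add_cancel]
    have hhom : c * r - r * c ∈ 𝒜 1 :=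
      sub_mem (sff_mul_mem 𝒜 hc hr (by decide)) (sff_mul_mem 𝒜 hr hc (by decide))
    exact sub_eq_zero.mp
      (sff_left_ann 𝒜 hprime I hIne hhom (sff_ann_of_parts 𝒜 I hann))
  have key1 : ∀ s ∈ 𝒜 1, c * s = -(s * c) := by
    intro s hs
    have hann : ∀ (j : ZMod 2), ∀ y ∈ I.carrier, y ∈ 𝒜 j → (c * s + s * c) * y = 0 := by
      intro j y hyI hyj
      rcases sff_zmod2 j with rfl | rfl
      · have hsy : c * (s * y) = -((s * y) * c) :=
          eq_neg_of_add_eq_zero_left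
            (h1 _ (I.mul_mem_left s y hyI) (sff_mul_mem 𝒜 hs hyj (by decide)))
        have hcy : c * y = y * c := h0 y hyI hyj
        rw [add_mul, mul_assoc, mul_assoc, hsy, hcy, mul_assoc, neg_add_cancel]
      · have hsy : c * (s * y) = (s * y) * c :=
          h0 _ (I.mul_mem_left s y hyI) (sff_mul_mem 𝒜 hs hyj (by decide))
        have hcy : c * y = -(y * c) := eq_neg_of_add_eq_zero_left (h1 y hyI hyj)
        rw [add_mul, mul_assoc, mul_assoc, hsy, hcy, mul_neg, mul_assoc, add_neg_cancel]
    have hhom : c * s + s * c ∈ 𝒜 0 :=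
      add_mem (sff_mul_mem 𝒜 hc hs (by decide)) (sff_mul_mem 𝒜 hs hc (by decide))
    exact eq_neg_of_add_eq_zero_left
      (sff_left_ann 𝒜 hprime I hIne hhom (sff_ann_of_parts 𝒜 I hann))
  have hcc : c * c = 0 := by
    have := key1 c hc
    have h2 : c * c + c * c = 0 := by nth_rewrite 2 [this]; exact add_neg_cancel _
    exact sff_two_cancel (φ := φ) h2
  refine sff_full_sandwich 𝒜 hprime hc (fun m => ?_)
  have e : c * m * c = (c * ((decompose 𝒜 m) 0 : A)) * c + (c * ((decompose 𝒜 m) 1 : A)) * c := by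
    rw [← add_mul, ← mul_add, ← sff_decomp_two 𝒜 m]
  rw [e, key0 _ (SetLike.coe_mem _), key1 _ (SetLike.coe_mem _), mul_assoc, hcc, mul_zero,
    neg_mul, mul_assoc, hcc, mul_zero, neg_zero, add_zero]

end SFFPrime
section SFFL

open DirectSum

set_option linter.unusedSectionVars false
set_option maxHeartbeats 1000000

variable {φ A : Type*} [CommRing φ] [Invertible (2:φ)] [Ring A] [Algebra φ A]
variable (𝒜 : ZMod 2 → Submodule φ A) [GradedAlgebra 𝒜]

private lemma sff_comm_of_parts (I : SuperIdeal 𝒜) {c : A}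
    (hpart : ∀ (j : ZMod 2), ∀ y ∈ I.carrier, y ∈ 𝒜 j → c * y = y * c) :
    ∀ y ∈ I.carrier, c * y = y * c := by
  intro y hy
  have e : c * y = c * ((decompose 𝒜 y) 0 : A) + c * ((decompose 𝒜 y) 1 : A) := by
    rw [← mul_add, ← sff_decomp_two 𝒜 y]
  rw [e, hpart 0 _ (I.graded' 0 y hy) (SetLike.coe_mem _),
    hpart 1 _ (I.graded' 1 y hy) (SetLike.coe_mem _), ← add_mul, ← sff_decomp_two 𝒜 y]

variable (I : SuperIdeal 𝒜) (U : AddSubgroup A)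

private abbrev sffL : AddSubgroup A := superBrAdd 𝒜 (↑U) (↑I.carrier)

private lemma sff_mem_L {i j : ZMod 2} {u y : A} (hu : u ∈ U) (hui : u ∈ 𝒜 i)
    (hy : y ∈ I.carrier) (hyj : y ∈ 𝒜 j) : sbr i j u y ∈ sffL 𝒜 I U :=
  AddSubgroup.subset_closure ⟨i, j, u, y, hu, hui, hy, hyj, rfl⟩

private lemma sff_L_sub_U
    (hUI : ∀ (i j : ZMod 2), ∀ u ∈ U, u ∈ 𝒜 i → ∀ y ∈ I.carrier, y ∈ 𝒜 j →
      sbr i j u y ∈ U) :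
    ∀ x ∈ sffL 𝒜 I U, x ∈ U := by
  intro x hx
  refine (AddSubgroup.closure_le U).mpr ?_ hx
  rintro z ⟨i, j, u, y, hu, hui, hy, hyj, rfl⟩
  exact hUI i j u hu hui y hy hyj

private lemma sff_HC
    (hyp : superBrAdd 𝒜
        (↑(superBrAdd 𝒜 (↑(superBrAdd 𝒜 (↑U) (↑I.carrier)))
            (↑(superBrAdd 𝒜 (↑U) (↑I.carrier)))) : Set A)
        (↑I.carrier) = ⊥)
    {i j : ZMod 2} {g y : A}
    (hg : g ∈ superBrAdd 𝒜 (↑(sffL 𝒜 I U) : Set A) (↑(sffL 𝒜 I U) : Set A))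
    (hgi : g ∈ 𝒜 i) (hy : y ∈ I.carrier) (hyj : y ∈ 𝒜 j) : sbr i j g y = 0 := by
  have hmem : sbr i j g y ∈ superBrAdd 𝒜
      (↑(superBrAdd 𝒜 (↑(superBrAdd 𝒜 (↑U) (↑I.carrier)))
          (↑(superBrAdd 𝒜 (↑U) (↑I.carrier)))) : Set A) (↑I.carrier) :=
    AddSubgroup.subset_closure ⟨i, j, g, y, hg, hgi, hy, hyj, rfl⟩
  rw [hyp] at hmem
  simpa using hmem

/-- Even elements of `[L,L]` are in the even center. -/
private lemma sff_MZ (hprime : SuperPrime 𝒜) (hIne : I.carrier ≠ ⊥)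
    (hyp : superBrAdd 𝒜
        (↑(superBrAdd 𝒜 (↑(superBrAdd 𝒜 (↑U) (↑I.carrier)))
            (↑(superBrAdd 𝒜 (↑U) (↑I.carrier)))) : Set A)
        (↑I.carrier) = ⊥)
    {g : A} (hg : g ∈ superBrAdd 𝒜 (↑(sffL 𝒜 I U) : Set A) (↑(sffL 𝒜 I U) : Set A))
    (hg0 : g ∈ 𝒜 0) : g ∈ evenCenter 𝒜 := by
  refine sff_even_centralizer 𝒜 hprime I hIne hg0 (sff_comm_of_parts 𝒜 I ?_)
  intro j y hyI hyj
  have h := sff_HC 𝒜 I U hyp hg hg0 hyI hyj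
  rcases sff_zmod2 j with rfl | rfl
  · rw [sff_sbr00] at h; exact sub_eq_zero.mp h
  · rw [sff_sbr01] at h; exact sub_eq_zero.mp h

/-- Odd elements of `[L,L]` vanish. -/
private lemma sff_MZ1 (hprime : SuperPrime 𝒜) (hIne : I.carrier ≠ ⊥)
    (hyp : superBrAdd 𝒜
        (↑(superBrAdd 𝒜 (↑(superBrAdd 𝒜 (↑U) (↑I.carrier)))
            (↑(superBrAdd 𝒜 (↑U) (↑I.carrier)))) : Set A)
        (↑I.carrier) = ⊥)
    {g : A} (hg : g ∈ superBrAdd 𝒜 (↑(sffL 𝒜 I U) : Set A) (↑(sffL 𝒜 I U) : Set A))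
    (hg1 : g ∈ 𝒜 1) : g = 0 := by
  refine sff_odd_supercentral 𝒜 hprime I hIne hg1 ?_ ?_
  · intro y hy hy0
    have h := sff_HC 𝒜 I U hyp hg hg1 hy hy0
    rw [sff_sbr10] at h; exact sub_eq_zero.mp h
  · intro y hy hy1
    have h := sff_HC 𝒜 I U hyp hg hg1 hy hy1
    rw [sff_sbr11] at h; exact h

/-- G1: for odd `c, d ∈ L`, `cd = dc ∈ Z`. -/
private lemma sff_G1 (hprime : SuperPrime 𝒜) (hIne : I.carrier ≠ ⊥)
    (hU1 : ∀ u v : A, u ∈ U → u ∈ 𝒜 1 → v ∈ U → v ∈ 𝒜 1 → scirc 1 1 u v = 0)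
    (hUI : ∀ (i j : ZMod 2), ∀ u ∈ U, u ∈ 𝒜 i → ∀ y ∈ I.carrier, y ∈ 𝒜 j →
      sbr i j u y ∈ U)
    (hyp : superBrAdd 𝒜
        (↑(superBrAdd 𝒜 (↑(superBrAdd 𝒜 (↑U) (↑I.carrier)))
            (↑(superBrAdd 𝒜 (↑U) (↑I.carrier)))) : Set A)
        (↑I.carrier) = ⊥)
    {c d : A} (hc : c ∈ sffL 𝒜 I U) (hc1 : c ∈ 𝒜 1)
    (hd : d ∈ sffL 𝒜 I U) (hd1 : d ∈ 𝒜 1) :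
    c * d ∈ evenCenter 𝒜 ∧ c * d = d * c := by
  have hcd : c * d = d * c := by
    have h := hU1 c d (sff_L_sub_U 𝒜 I U hUI c hc) hc1 (sff_L_sub_U 𝒜 I U hUI d hd) hd1
    rw [sff_scirc11] at h; exact sub_eq_zero.mp h
  have hsZ : c * d + d * c ∈ evenCenter 𝒜 := by
    refine sff_MZ 𝒜 I U hprime hIne hyp
      (AddSubgroup.subset_closure ⟨1, 1, c, d, hc, hc1, hd, hd1, (sff_sbr11 c d).symm⟩) ?_
    exact add_mem (sff_mul_mem 𝒜 hc1 hd1 (by decide)) (sff_mul_mem 𝒜 hd1 hc1 (by decide))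
  have hdd : c * d + d * c = (2:φ) • (c * d) := by rw [two_smul]; rw [hcd]
  have h3 := sff_ec_smul 𝒜 (⅟(2:φ)) hsZ
  rw [hdd, smul_smul, invOf_mul_self, one_smul] at h3
  exact ⟨h3, hcd⟩

/-- G2: for even `a, b ∈ L`, `ab ∈ Z`. -/
private lemma sff_G2 (hprime : SuperPrime 𝒜) (hIne : I.carrier ≠ ⊥)
    (hU0 : ∀ u v : A, u ∈ U → u ∈ 𝒜 0 → v ∈ U → v ∈ 𝒜 0 → scirc 0 0 u v ∈ evenCenter 𝒜)
    (hUI : ∀ (i j : ZMod 2), ∀ u ∈ U, u ∈ 𝒜 i → ∀ y ∈ I.carrier, y ∈ 𝒜 j →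
      sbr i j u y ∈ U)
    (hyp : superBrAdd 𝒜
        (↑(superBrAdd 𝒜 (↑(superBrAdd 𝒜 (↑U) (↑I.carrier)))
            (↑(superBrAdd 𝒜 (↑U) (↑I.carrier)))) : Set A)
        (↑I.carrier) = ⊥)
    {a b : A} (ha : a ∈ sffL 𝒜 I U) (ha0 : a ∈ 𝒜 0)
    (hb : b ∈ sffL 𝒜 I U) (hb0 : b ∈ 𝒜 0) :
    a * b ∈ evenCenter 𝒜 := by
  have htZ : a * b - b * a ∈ evenCenter 𝒜 := by
    refine sff_MZ 𝒜 I U hprime hIne hyp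
      (AddSubgroup.subset_closure ⟨0, 0, a, b, ha, ha0, hb, hb0, (sff_sbr00 a b).symm⟩) ?_
    exact sub_mem (sff_mul_mem 𝒜 ha0 hb0 (by decide)) (sff_mul_mem 𝒜 hb0 ha0 (by decide))
  have hcZ : a * b + b * a ∈ evenCenter 𝒜 := by
    have h := hU0 a b (sff_L_sub_U 𝒜 I U hUI a ha) ha0 (sff_L_sub_U 𝒜 I U hUI b hb) hb0
    rwa [sff_scirc00] at h
  have hsum : (a * b - b * a) + (a * b + b * a) = (2:φ) • (a * b) := by
    rw [two_smul]; abel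
  have h3 := sff_ec_smul 𝒜 (⅟(2:φ)) (sff_ec_add 𝒜 htZ hcZ)
  rw [hsum, smul_smul, invOf_mul_self, one_smul] at h3
  exact h3

/-- G3: even and odd elements of `L` commute. -/
private lemma sff_G3 (hprime : SuperPrime 𝒜) (hIne : I.carrier ≠ ⊥)
    (hyp : superBrAdd 𝒜
        (↑(superBrAdd 𝒜 (↑(superBrAdd 𝒜 (↑U) (↑I.carrier)))
            (↑(superBrAdd 𝒜 (↑U) (↑I.carrier)))) : Set A)
        (↑I.carrier) = ⊥)
    {a c : A} (ha : a ∈ sffL 𝒜 I U) (ha0 : a ∈ 𝒜 0)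
    (hc : c ∈ sffL 𝒜 I U) (hc1 : c ∈ 𝒜 1) :
    a * c = c * a := by
  have h : a * c - c * a = 0 := by
    refine sff_MZ1 𝒜 I U hprime hIne hyp
      (AddSubgroup.subset_closure ⟨0, 1, a, c, ha, ha0, hc, hc1, (sff_sbr01 a c).symm⟩) ?_
    exact sub_mem (sff_mul_mem 𝒜 ha0 hc1 (by decide)) (sff_mul_mem 𝒜 hc1 ha0 (by decide))
  exact sub_eq_zero.mp h

/-- If `u² ∈ Z` is nonzero and `u·[u,y] ∈ Z` then `u` commutes with `y`. -/
private lemma sff_sq_comm (hprime : SuperPrime 𝒜) {u : A} (hzZ : u * u ∈ evenCenter 𝒜)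
    (hzne : u * u ≠ 0) {y : A} (hw : u * (u * y - y * u) ∈ evenCenter 𝒜) :
    u * y = y * u := by
  have hzc : ∀ t : A, (u * u) * t = t * (u * u) := hzZ.2
  have hwc : ∀ t : A, (u * (u * y - y * u)) * t = t * (u * (u * y - y * u)) := hw.2
  have hm : u * (y * u) = (u * u) * y - u * (u * y - y * u) := by
    rw [mul_sub, ← mul_assoc u u y, sub_sub_cancel]
  have hE1 : (u * u) * (u * y) = (u * u) * (y * u) - (u * (u * y - y * u)) * u := by
    have l : (u * (y * u)) * u = (u * u) * (u * y) := by
      rw [mul_assoc, mul_assoc y u u, ← hzc y, ← mul_assoc, ← hzc u, mul_assoc]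
    have r : (u * (y * u)) * u
        = (u * u) * (y * u) - (u * (u * y - y * u)) * u := by
      rw [hm, sub_mul, mul_assoc (u*u) y u]
    rw [← l]; exact r
  have hE2 : (u * u) * (y * u) = (u * u) * (u * y) - (u * (u * y - y * u)) * u := by
    have l : u * (u * (y * u)) = (u * u) * (y * u) := by rw [← mul_assoc]
    have r : u * (u * (y * u)) = (u * u) * (u * y) - (u * (u * y - y * u)) * u := by
      rw [hm, mul_sub, ← mul_assoc u (u*u) y, ← hzc u, mul_assoc (u*u) u y, ← hwc u]
    rw [← l]; exact r
  have hwu : (u * (u * y - y * u)) * u = 0 := by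
    have h3 := hE1
    rw [hE2] at h3
    have h4 : (u * (u * y - y * u)) * u + (u * (u * y - y * u)) * u
        = (u*u)*(u*y) - ((u*u)*(u*y) - (u * (u * y - y * u)) * u - (u * (u * y - y * u)) * u) := by
      abel
    rw [← h3, sub_self] at h4
    exact sff_two_cancel (φ := φ) h4
  rw [hwu, sub_zero] at hE1
  have hfin : (u * u) * (u * y - y * u) = 0 := by
    rw [mul_sub, hE1, sub_self]
  exact sub_eq_zero.mp (sff_z_nzd 𝒜 hprime hzZ hzne hfin)

private lemma sff_sq_comm_odd (hprime : SuperPrime 𝒜) {u : A}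
    (hzZ : u * u ∈ evenCenter 𝒜) (hzne : u * u ≠ 0)
    {y : A} (h : u * (y * u) = (y * u) * u) : u * y = y * u := by
  have hzc := hzZ.2
  have hug : u * (u * y - y * u) = 0 := by
    rw [mul_sub, ← mul_assoc, h, mul_assoc y u u, hzc y]
    exact sub_self _
  have hfin : (u * u) * (u * y - y * u) = 0 := by rw [mul_assoc, hug, mul_zero]
  exact sub_eq_zero.mp (sff_z_nzd 𝒜 hprime hzZ hzne hfin)

/-- The package: odd `u` with nonzero central square and `u·[u,I₀] ⊆ Z` is central. -/
private lemma sff_central_pkg (hprime : SuperPrime 𝒜) (hIne : I.carrier ≠ ⊥)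
    {u : A} (hu1 : u ∈ 𝒜 1)
    (hzZ : u * u ∈ evenCenter 𝒜) (hzne : u * u ≠ 0)
    (hw : ∀ y ∈ I.carrier, y ∈ 𝒜 0 → u * (u * y - y * u) ∈ evenCenter 𝒜) :
    ∀ t : A, u * t = t * u := by
  have s1 : ∀ y ∈ I.carrier, y ∈ 𝒜 0 → u * y = y * u := fun y hy hy0 =>
    sff_sq_comm 𝒜 hprime hzZ hzne (hw y hy hy0)
  have s2 : ∀ y ∈ I.carrier, y ∈ 𝒜 1 → u * y = y * u := by
    intro y hy hy1
    have hyu : y * u ∈ I.carrier := I.mul_mem_right u y hy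
    have hyu0 : y * u ∈ 𝒜 0 := sff_mul_mem 𝒜 hy1 hu1 (by decide)
    exact sff_sq_comm_odd 𝒜 hprime hzZ hzne (s1 _ hyu hyu0)
  have sI : ∀ y ∈ I.carrier, u * y = y * u := by
    refine sff_comm_of_parts 𝒜 I ?_
    intro j y hyI hyj
    rcases sff_zmod2 j with rfl | rfl
    · exact s1 y hyI hyj
    · exact s2 y hyI hyj
  have key : ∀ (k : ZMod 2), ∀ r ∈ 𝒜 k, u * r = r * u := by
    intro k r hr
    have hann : ∀ y ∈ I.carrier, (u * r - r * u) * y = 0 := by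
      intro y hy
      have h1 : u * (r * y) = (r * y) * u := sI _ (I.mul_mem_left r y hy)
      have h2 : u * y = y * u := sI y hy
      rw [sub_mul, mul_assoc, mul_assoc, h1, h2, ← mul_assoc, sub_self]
    exact sub_eq_zero.mp (sff_left_ann 𝒜 hprime I hIne
      (sub_mem (sff_mul_mem 𝒜 hu1 hr rfl) (sff_mul_mem 𝒜 hr hu1 (add_comm k 1))) hann)
  intro t
  have e : u * t = u * ((decompose 𝒜 t) 0 : A) + u * ((decompose 𝒜 t) 1 : A) := by
    rw [← mul_add, ← sff_decomp_two 𝒜 t]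
  rw [e, key 0 _ (SetLike.coe_mem _), key 1 _ (SetLike.coe_mem _), ← add_mul,
    ← sff_decomp_two 𝒜 t]

end SFFL
section SFFStep1

open DirectSum

set_option linter.unusedSectionVars false
set_option maxHeartbeats 1000000

variable {φ A : Type*} [CommRing φ] [Invertible (2:φ)] [Ring A] [Algebra φ A]
variable (𝒜 : ZMod 2 → Submodule φ A) [GradedAlgebra 𝒜]
variable (I : SuperIdeal 𝒜) (U : AddSubgroup A)

private lemma sff_L1L1 (hprime : SuperPrime 𝒜) (hIne : I.carrier ≠ ⊥)
    (hUI : ∀ (i j : ZMod 2), ∀ u ∈ U, u ∈ 𝒜 i → ∀ y ∈ I.carrier, y ∈ 𝒜 j →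
      sbr i j u y ∈ U)
    (hU0 : ∀ u v : A, u ∈ U → u ∈ 𝒜 0 → v ∈ U → v ∈ 𝒜 0 → scirc 0 0 u v ∈ evenCenter 𝒜)
    (hU1 : ∀ u v : A, u ∈ U → u ∈ 𝒜 1 → v ∈ U → v ∈ 𝒜 1 → scirc 1 1 u v = 0)
    (hyp : superBrAdd 𝒜
        (↑(superBrAdd 𝒜 (↑(superBrAdd 𝒜 (↑U) (↑I.carrier)))
            (↑(superBrAdd 𝒜 (↑U) (↑I.carrier)))) : Set A)
        (↑I.carrier) = ⊥) :
    ∀ c d : A, c ∈ sffL 𝒜 I U → c ∈ 𝒜 1 → d ∈ sffL 𝒜 I U → d ∈ 𝒜 1 → c * d = 0 := by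
  have SQ : ∀ c : A, c ∈ sffL 𝒜 I U → c ∈ 𝒜 1 → c * c = 0 := by
    intro c hcL hc1
    by_contra hzne
    have hzZ : c * c ∈ evenCenter 𝒜 :=
      (sff_G1 𝒜 I U hprime hIne hU1 hUI hyp hcL hc1 hcL hc1).1
    have hw : ∀ y ∈ I.carrier, y ∈ 𝒜 0 → c * (c * y - y * c) ∈ evenCenter 𝒜 := by
      intro y hy hy0
      have hpL : c * y - y * c ∈ sffL 𝒜 I U := by
        have := sff_mem_L 𝒜 I U (i := 1) (j := 0) (sff_L_sub_U 𝒜 I U hUI c hcL) hc1 hy hy0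
        rwa [sff_sbr10] at this
      have hp1 : c * y - y * c ∈ 𝒜 1 :=
        sub_mem (sff_mul_mem 𝒜 hc1 hy0 (by decide)) (sff_mul_mem 𝒜 hy0 hc1 (by decide))
      exact (sff_G1 𝒜 I U hprime hIne hU1 hUI hyp hcL hc1 hpL hp1).1
    have ccen : ∀ t, c * t = t * c :=
      sff_central_pkg 𝒜 I hprime hIne hc1 hzZ hzne hw
    have cnz : ∀ m : A, c * m = 0 → m = 0 := by
      intro m hm
      refine sff_z_nzd 𝒜 hprime hzZ hzne ?_
      rw [mul_assoc, hm, mul_zero]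
    have cancel : ∀ a b : A, c * a = c * b → a = b := by
      intro a b h
      have := cnz (a - b) (by rw [mul_sub, h, sub_self])
      exact sub_eq_zero.mp this
    -- every odd element of L is central
    have s5 : ∀ e : A, e ∈ sffL 𝒜 I U → e ∈ 𝒜 1 → ∀ t, e * t = t * e := by
      intro e heL he1 t
      have heZ : c * e ∈ evenCenter 𝒜 :=
        (sff_G1 𝒜 I U hprime hIne hU1 hUI hyp hcL hc1 heL he1).1
      refine cancel _ _ ?_
      calc c * (e * t) = (c * e) * t := (mul_assoc _ _ _).symm
      _ = t * (c * e) := heZ.2 t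
      _ = (t * c) * e := (mul_assoc _ _ _).symm
      _ = (c * t) * e := by rw [← ccen t]
      _ = c * (t * e) := mul_assoc _ _ _
    -- every plain bracket [U, I] (homogeneous pieces) is central
    have s6 : ∀ (i j : ZMod 2) (u y : A), u ∈ U → u ∈ 𝒜 i → y ∈ I.carrier → y ∈ 𝒜 j →
        ∀ t, (u * y - y * u) * t = t * (u * y - y * u) := by
      intro i j u y hu hui hy hyj t
      rcases sff_zmod2 i with rfl | rfl <;> rcases sff_zmod2 j with rfl | rfl
      · -- (0,0)
        have hcyI : c * y ∈ I.carrier := I.mul_mem_left c y hy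
        have hcy1 : c * y ∈ 𝒜 1 := sff_mul_mem 𝒜 hc1 hyj (by decide)
        have hqL : u * (c * y) - (c * y) * u ∈ sffL 𝒜 I U := by
          have := sff_mem_L 𝒜 I U (i := 0) (j := 1) hu hui hcyI hcy1
          rwa [sff_sbr01] at this
        have hq1 : u * (c * y) - (c * y) * u ∈ 𝒜 1 :=
          sub_mem (sff_mul_mem 𝒜 hui hcy1 (by decide)) (sff_mul_mem 𝒜 hcy1 hui (by decide))
        have hqc := s5 _ hqL hq1
        have hqe : u * (c * y) - (c * y) * u = c * (u * y - y * u) := by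
          rw [mul_sub]
          congr 1
          · rw [← mul_assoc, ← ccen u, mul_assoc]
          · rw [mul_assoc]
        rw [hqe] at hqc
        refine cancel _ _ ?_
        calc c * ((u * y - y * u) * t) = (c * (u * y - y * u)) * t := (mul_assoc _ _ _).symm
        _ = t * (c * (u * y - y * u)) := hqc t
        _ = (t * c) * (u * y - y * u) := (mul_assoc _ _ _).symm
        _ = (c * t) * (u * y - y * u) := by rw [← ccen t]
        _ = c * (t * (u * y - y * u)) := mul_assoc _ _ _
      · -- (0,1)
        have hpL : u * y - y * u ∈ sffL 𝒜 I U := by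
          have := sff_mem_L 𝒜 I U (i := 0) (j := 1) hu hui hy hyj
          rwa [sff_sbr01] at this
        have hp1 : u * y - y * u ∈ 𝒜 1 :=
          sub_mem (sff_mul_mem 𝒜 hui hyj (by decide)) (sff_mul_mem 𝒜 hyj hui (by decide))
        exact s5 _ hpL hp1 t
      · -- (1,0)
        have hpL : u * y - y * u ∈ sffL 𝒜 I U := by
          have := sff_mem_L 𝒜 I U (i := 1) (j := 0) hu hui hy hyj
          rwa [sff_sbr10] at this
        have hp1 : u * y - y * u ∈ 𝒜 1 :=
          sub_mem (sff_mul_mem 𝒜 hui hyj (by decide)) (sff_mul_mem 𝒜 hyj hui (by decide))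
        exact s5 _ hpL hp1 t
      · -- (1,1)
        have hcyI : c * y ∈ I.carrier := I.mul_mem_left c y hy
        have hcy0 : c * y ∈ 𝒜 0 := sff_mul_mem 𝒜 hc1 hyj (by decide)
        have hqL : u * (c * y) - (c * y) * u ∈ sffL 𝒜 I U := by
          have := sff_mem_L 𝒜 I U (i := 1) (j := 0) hu hui hcyI hcy0
          rwa [sff_sbr10] at this
        have hq1 : u * (c * y) - (c * y) * u ∈ 𝒜 1 :=
          sub_mem (sff_mul_mem 𝒜 hui hcy0 (by decide)) (sff_mul_mem 𝒜 hcy0 hui (by decide))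
        have hqc := s5 _ hqL hq1
        have hqe : u * (c * y) - (c * y) * u = c * (u * y - y * u) := by
          rw [mul_sub]
          congr 1
          · rw [← mul_assoc, ← ccen u, mul_assoc]
          · rw [mul_assoc]
        rw [hqe] at hqc
        refine cancel _ _ ?_
        calc c * ((u * y - y * u) * t) = (c * (u * y - y * u)) * t := (mul_assoc _ _ _).symm
        _ = t * (c * (u * y - y * u)) := hqc t
        _ = (t * c) * (u * y - y * u) := (mul_assoc _ _ _).symm
        _ = (c * t) * (u * y - y * u) := by rw [← ccen t]
        _ = c * (t * (u * y - y * u)) := mul_assoc _ _ _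
    -- all plain brackets vanish
    have s7 : ∀ (i j : ZMod 2) (u y : A), u ∈ U → u ∈ 𝒜 i → y ∈ I.carrier → y ∈ 𝒜 j →
        u * y = y * u := by
      intro i j u y hu hui hy hyj
      have hyyI : y * y ∈ I.carrier := I.mul_mem_left y y hy
      have hjj : j + j = 0 := by rcases sff_zmod2 j with rfl | rfl <;> decide
      have hyy0 : y * y ∈ 𝒜 0 := sff_mul_mem 𝒜 hyj hyj hjj
      have hlam := s6 i j u y hu hui hy hyj
      have hlam2 := s6 i 0 u (y * y) hu hui hyyI hyy0
      have hL : u * (y * y) - (y * y) * u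
          = (u * y - y * u) * y + y * (u * y - y * u) := by noncomm_ring
      have h := hlam2 u
      rw [hL] at h
      have e1 : ((u * y - y * u) * y + y * (u * y - y * u)) * u
          = (u * y - y * u) * (y * u) + (u * y - y * u) * (y * u) := by
        rw [add_mul, ← hlam y, mul_assoc]
      have e2 : u * ((u * y - y * u) * y + y * (u * y - y * u))
          = (u * y - y * u) * (u * y) + (u * y - y * u) * (u * y) := by
        rw [mul_add, ← mul_assoc, ← hlam u, mul_assoc, ← mul_assoc u y (u * y - y * u),
          ← hlam (u * y)]
      rw [e1, e2] at h
      have h4 : ((u * y - y * u) * (u * y) - (u * y - y * u) * (y * u))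
            + ((u * y - y * u) * (u * y) - (u * y - y * u) * (y * u))
          = ((u * y - y * u) * (u * y) + (u * y - y * u) * (u * y))
            - ((u * y - y * u) * (y * u) + (u * y - y * u) * (y * u)) := by
        abel
      rw [← h, sub_self] at h4
      have hll : (u * y - y * u) * (u * y - y * u) = 0 := by
        have e3 : (u * y - y * u) * (u * y - y * u)
            = (u * y - y * u) * (u * y) - (u * y - y * u) * (y * u) := mul_sub _ _ _
        rw [e3]
        exact sff_two_cancel (φ := φ) h4
      have hhom : u * y - y * u ∈ 𝒜 (i + j) :=
        sub_mem (sff_mul_mem 𝒜 hui hyj rfl) (sff_mul_mem 𝒜 hyj hui (add_comm j i))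
      have := sff_central_sq 𝒜 hprime hhom (hlam) hll
      exact sub_eq_zero.mp this
    -- hence L ⊆ 𝒜 0
    have s8 : ∀ x ∈ sffL 𝒜 I U, x ∈ 𝒜 0 := by
      intro x hx
      have hle : sffL 𝒜 I U ≤ (𝒜 0).toAddSubgroup := by
        refine (AddSubgroup.closure_le _).mpr ?_
        rintro z ⟨i, j, u, y, hu, hui, hy, hyj, rfl⟩
        show sbr i j u y ∈ 𝒜 0
        rcases sff_zmod2 i with rfl | rfl <;> rcases sff_zmod2 j with rfl | rfl
        · rw [sff_sbr00]
          exact sub_mem (sff_mul_mem 𝒜 hui hyj (by decide)) (sff_mul_mem 𝒜 hyj hui (by decide))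
        · rw [sff_sbr01, s7 0 1 u y hu hui hy hyj, sub_self]; exact zero_mem _
        · rw [sff_sbr10, s7 1 0 u y hu hui hy hyj, sub_self]; exact zero_mem _
        · rw [sff_sbr11]
          exact add_mem (sff_mul_mem 𝒜 hui hyj (by decide)) (sff_mul_mem 𝒜 hyj hui (by decide))
      exact hle hx
    have hc0 : c ∈ 𝒜 0 := s8 c hcL
    exact hzne (by rw [sff_mem_zero_one 𝒜 hc0 hc1, zero_mul])
  intro c d hcL hc1 hdL hd1
  have hsum := SQ (c + d) (add_mem hcL hdL) (add_mem hc1 hd1)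
  have hcc := SQ c hcL hc1
  have hdd := SQ d hdL hd1
  have hcd := (sff_G1 𝒜 I U hprime hIne hU1 hUI hyp hcL hc1 hdL hd1).2
  have e : (c + d) * (c + d) = c * c + (c * d + d * c) + d * d := by noncomm_ring
  rw [e, hcc, hdd, zero_add, add_zero, hcd] at hsum
  have := sff_two_cancel (φ := φ) hsum
  rw [hcd]; exact this

end SFFStep1
/-- **(Steps 4–5 of case (a) in Theorem 2.4.)** Let `A` be a prime nontrivial superalgebra
over a commutative ring `φ` with `½ ∈ φ`, `I` a nonzero proper ideal, and `U` a graded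
additive subgroup with `[U, I] ⊆ U`, `u∘v ∈ Z` for `u, v ∈ U₀` and `u∘v = 0` for
`u, v ∈ U₁`. If `[[[U,I],[U,I]], I] = 0`, then `I₁(U₁)³ ⊆ Z`, and moreover either
`U₁U₁ = 0` or `A` is commutative. -/
theorem steps_four_five
    {φ A : Type*} [CommRing φ] [Invertible (2 : φ)] [Ring A] [Algebra φ A]
    (𝒜 : ZMod 2 → Submodule φ A) [GradedAlgebra 𝒜]
    (hprime : SuperPrime 𝒜) (hnontriv : 𝒜 1 ≠ ⊥)
    (I : SuperIdeal 𝒜) (hIne : I.carrier ≠ ⊥) (hIproper : I.carrier ≠ ⊤)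
    (U : AddSubgroup A)
    (hUgr : ∀ (i : ZMod 2), ∀ x ∈ U, ((DirectSum.decompose 𝒜 x) i : A) ∈ U)
    (hUI : ∀ (i j : ZMod 2), ∀ u ∈ U, u ∈ 𝒜 i → ∀ y ∈ I.carrier, y ∈ 𝒜 j →
      sbr i j u y ∈ U)
    (hU0 : ∀ u v : A, u ∈ U → u ∈ 𝒜 0 → v ∈ U → v ∈ 𝒜 0 → scirc 0 0 u v ∈ evenCenter 𝒜)
    (hU1 : ∀ u v : A, u ∈ U → u ∈ 𝒜 1 → v ∈ U → v ∈ 𝒜 1 → scirc 1 1 u v = 0)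
    (hyp : superBrAdd 𝒜
        (↑(superBrAdd 𝒜 (↑(superBrAdd 𝒜 (↑U) (↑I.carrier)))
            (↑(superBrAdd 𝒜 (↑U) (↑I.carrier)))) : Set A)
        (↑I.carrier) = ⊥) :
    (∀ y ∈ I.carrier, y ∈ 𝒜 1 → ∀ u v w : A, u ∈ U → u ∈ 𝒜 1 → v ∈ U → v ∈ 𝒜 1 →
      w ∈ U → w ∈ 𝒜 1 → y * u * v * w ∈ evenCenter 𝒜) ∧
    ((∀ u v : A, u ∈ U → u ∈ 𝒜 1 → v ∈ U → v ∈ 𝒜 1 → u * v = 0) ∨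
      (∀ x y : A, x * y = y * x)) := by
    classical
  have L1L1 := sff_L1L1 𝒜 I U hprime hIne hUI hU0 hU1 hyp
  have hUcomm : ∀ u v : A, u ∈ U → u ∈ 𝒜 1 → v ∈ U → v ∈ 𝒜 1 → u * v = v * u := by
    intro u v hu hu1 hv hv1
    have h := hU1 u v hu hu1 hv hv1
    rw [sff_scirc11] at h; exact sub_eq_zero.mp h
  have main2 : (∀ u v : A, u ∈ U → u ∈ 𝒜 1 → v ∈ U → v ∈ 𝒜 1 → u * v = 0) ∨
      (∀ x y : A, x * y = y * x) := by
    by_cases hQ : ∀ w y : A, w ∈ U → w ∈ 𝒜 1 → y ∈ I.carrier → y ∈ 𝒜 1 →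
        (w * y + y * w) * (w * y + y * w) = 0
    · -- branch β : all such squares vanish, and U₁ = 0
      left
      have bmain : ∀ w : A, w ∈ U → w ∈ 𝒜 1 → ∀ y ∈ I.carrier, y ∈ 𝒜 1 →
          w * y + y * w = 0 := by
        intro w hw hw1 y hyI hy1
        have heL : w * y + y * w ∈ sffL 𝒜 I U := by
          have := sff_mem_L 𝒜 I U (i := 1) (j := 1) hw hw1 hyI hy1
          rwa [sff_sbr11] at this
        have he0 : w * y + y * w ∈ 𝒜 0 :=
          add_mem (sff_mul_mem 𝒜 hw1 hy1 (by decide)) (sff_mul_mem 𝒜 hy1 hw1 (by decide))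
        have heU : w * y + y * w ∈ U := sff_L_sub_U 𝒜 I U hUI _ heL
        have hee : (w * y + y * w) * (w * y + y * w) = 0 := hQ w y hw hw1 hyI hy1
        have hpart : ∀ (j : ZMod 2), ∀ x ∈ I.carrier, x ∈ 𝒜 j →
            (w * y + y * w) * x * (w * y + y * w) = 0 := by
          intro j x hxI hxj
          rcases sff_zmod2 j with rfl | rfl
          · have hfL : (w * y + y * w) * x - x * (w * y + y * w) ∈ sffL 𝒜 I U := by
              have := sff_mem_L 𝒜 I U (i := 0) (j := 0) heU he0 hxI hxj
              rwa [sff_sbr00] at this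
            have hf0 : (w * y + y * w) * x - x * (w * y + y * w) ∈ 𝒜 0 :=
              sub_mem (sff_mul_mem 𝒜 he0 hxj (by decide)) (sff_mul_mem 𝒜 hxj he0 (by decide))
            have hef := sff_G2 𝒜 I U hprime hIne hU0 hUI hyp heL he0 hfL hf0
            have hxi : (w * y + y * w) * ((w * y + y * w) * x - x * (w * y + y * w))
                = -((w * y + y * w) * x * (w * y + y * w)) := by
              rw [mul_sub, ← mul_assoc, hee, zero_mul, zero_sub, ← mul_assoc]
            rw [hxi] at hef
            have hxiZ := sff_ec_neg 𝒜 hef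
            rw [neg_neg] at hxiZ
            have hsq : ((w * y + y * w) * x * (w * y + y * w))
                * ((w * y + y * w) * x * (w * y + y * w)) = 0 := by
              have e4 : ((w * y + y * w) * x * (w * y + y * w))
                  * ((w * y + y * w) * x * (w * y + y * w))
                  = (w * y + y * w) * x
                    * ((w * y + y * w) * (w * y + y * w)) * (x * (w * y + y * w)) := by
                simp only [mul_assoc]
              rw [e4, hee, mul_zero, zero_mul]
            have hmem : (w * y + y * w) * x * (w * y + y * w) ∈ 𝒜 0 :=
              sff_mul_mem 𝒜 (sff_mul_mem 𝒜 he0 hxj (k := 0) (by decide)) he0 (by decide)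
            exact sff_central_sq 𝒜 hprime hmem hxiZ.2 hsq
          · have hhL : (w * y + y * w) * x - x * (w * y + y * w) ∈ sffL 𝒜 I U := by
              have := sff_mem_L 𝒜 I U (i := 0) (j := 1) heU he0 hxI hxj
              rwa [sff_sbr01] at this
            have hh1 : (w * y + y * w) * x - x * (w * y + y * w) ∈ 𝒜 1 :=
              sub_mem (sff_mul_mem 𝒜 he0 hxj (by decide)) (sff_mul_mem 𝒜 hxj he0 (by decide))
            have h3 := sff_G3 𝒜 I U hprime hIne hyp heL he0 hhL hh1
            have l : (w * y + y * w) * ((w * y + y * w) * x - x * (w * y + y * w))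
                = -((w * y + y * w) * x * (w * y + y * w)) := by
              rw [mul_sub, ← mul_assoc, hee, zero_mul, zero_sub, ← mul_assoc]
            have r : ((w * y + y * w) * x - x * (w * y + y * w)) * (w * y + y * w)
                = (w * y + y * w) * x * (w * y + y * w) := by
              rw [sub_mul, mul_assoc x _ _, hee, mul_zero, sub_zero]
            rw [l, r] at h3
            have hsum : (w * y + y * w) * x * (w * y + y * w)
                + (w * y + y * w) * x * (w * y + y * w) = 0 := by
              nth_rewrite 1 [← h3]
              exact neg_add_cancel _
            exact sff_two_cancel (φ := φ) hsum
        have heIe : ∀ x ∈ I.carrier, (w * y + y * w) * x * (w * y + y * w) = 0 := by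
          intro x hxI
          have e5 : (w * y + y * w) * x * (w * y + y * w)
              = (w * y + y * w) * ((decompose 𝒜 x) 0 : A) * (w * y + y * w)
                + (w * y + y * w) * ((decompose 𝒜 x) 1 : A) * (w * y + y * w) := by
            rw [← add_mul, ← mul_add, ← sff_decomp_two 𝒜 x]
          rw [e5, hpart 0 _ (I.graded' 0 x hxI) (SetLike.coe_mem _),
            hpart 1 _ (I.graded' 1 x hxI) (SetLike.coe_mem _), add_zero]
        exact sff_I_sandwich 𝒜 hprime I hIne he0 heIe
      have hbr0 : ∀ u : A, u ∈ U → u ∈ 𝒜 1 → ∀ y ∈ I.carrier, y ∈ 𝒜 0 →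
          u * y - y * u = 0 := by
        intro u hu hu1 y hyI hy0
        have hcL : u * y - y * u ∈ sffL 𝒜 I U := by
          have := sff_mem_L 𝒜 I U (i := 1) (j := 0) hu hu1 hyI hy0
          rwa [sff_sbr10] at this
        have hc1 : u * y - y * u ∈ 𝒜 1 :=
          sub_mem (sff_mul_mem 𝒜 hu1 hy0 (by decide)) (sff_mul_mem 𝒜 hy0 hu1 (by decide))
        have hcU : u * y - y * u ∈ U := sff_L_sub_U 𝒜 I U hUI _ hcL
        have hcc : (u * y - y * u) * (u * y - y * u) = 0 := L1L1 _ _ hcL hc1 hcL hc1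
        have hpart : ∀ (j : ZMod 2), ∀ x ∈ I.carrier, x ∈ 𝒜 j →
            (u * y - y * u) * x * (u * y - y * u) = 0 := by
          intro j x hxI hxj
          rcases sff_zmod2 j with rfl | rfl
          · have hpL : (u * y - y * u) * x - x * (u * y - y * u) ∈ sffL 𝒜 I U := by
              have := sff_mem_L 𝒜 I U (i := 1) (j := 0) hcU hc1 hxI hxj
              rwa [sff_sbr10] at this
            have hp1 : (u * y - y * u) * x - x * (u * y - y * u) ∈ 𝒜 1 :=
              sub_mem (sff_mul_mem 𝒜 hc1 hxj (by decide)) (sff_mul_mem 𝒜 hxj hc1 (by decide))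
            have h0 := L1L1 _ _ hpL hp1 hcL hc1
            rw [sub_mul] at h0
            have h1 := sub_eq_zero.mp h0
            rw [h1, mul_assoc, hcc, mul_zero]
          · have hanti := bmain _ hcU hc1 x hxI hxj
            have hcx : (u * y - y * u) * x = -(x * (u * y - y * u)) :=
              eq_neg_of_add_eq_zero_left hanti
            rw [hcx, neg_mul, mul_assoc, hcc, mul_zero, neg_zero]
        have hcIc : ∀ x ∈ I.carrier, (u * y - y * u) * x * (u * y - y * u) = 0 := by
          intro x hxI
          have e5 : (u * y - y * u) * x * (u * y - y * u)
              = (u * y - y * u) * ((decompose 𝒜 x) 0 : A) * (u * y - y * u)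
                + (u * y - y * u) * ((decompose 𝒜 x) 1 : A) * (u * y - y * u) := by
            rw [← add_mul, ← mul_add, ← sff_decomp_two 𝒜 x]
          rw [e5, hpart 0 _ (I.graded' 0 x hxI) (SetLike.coe_mem _),
            hpart 1 _ (I.graded' 1 x hxI) (SetLike.coe_mem _), add_zero]
        exact sff_I_sandwich 𝒜 hprime I hIne hc1 hcIc
      have hU1z : ∀ u : A, u ∈ U → u ∈ 𝒜 1 → u = 0 := by
        intro u hu hu1
        refine sff_odd_supercentral 𝒜 hprime I hIne hu1 ?_ ?_
        · intro y hy hy0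
          exact sub_eq_zero.mp (hbr0 u hu hu1 y hy hy0)
        · intro y hy hy1
          exact bmain u hu hu1 y hy hy1
      intro u v hu hu1 _ _
      rw [hU1z u hu hu1, zero_mul]
    · -- branch α
      push_neg at hQ
      obtain ⟨w0, y0, hw0U, hw01, hy0I, hy01, hzne⟩ := hQ
      have heL : w0 * y0 + y0 * w0 ∈ sffL 𝒜 I U := by
        have := sff_mem_L 𝒜 I U (i := 1) (j := 1) hw0U hw01 hy0I hy01
        rwa [sff_sbr11] at this
      have he0 : w0 * y0 + y0 * w0 ∈ 𝒜 0 :=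
        add_mem (sff_mul_mem 𝒜 hw01 hy01 (by decide)) (sff_mul_mem 𝒜 hy01 hw01 (by decide))
      have hzZ : (w0 * y0 + y0 * w0) * (w0 * y0 + y0 * w0) ∈ evenCenter 𝒜 :=
        sff_G2 𝒜 I U hprime hIne hU0 hUI hyp heL he0 heL he0
      -- all products U₁U₁ are central
      have hUU : ∀ u v : A, u ∈ U → u ∈ 𝒜 1 → v ∈ U → v ∈ 𝒜 1 →
          u * v ∈ evenCenter 𝒜 := by
        intro u v hu hu1 hv hv1
        have hyuvI : y0 * (u * v) ∈ I.carrier := I.mul_mem_right (u * v) y0 hy0I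
        have hyuv1 : y0 * (u * v) ∈ 𝒜 1 :=
          sff_mul_mem 𝒜 hy01 (sff_mul_mem 𝒜 hu1 hv1 (k := 0) (by decide)) (by decide)
        have hgenL : w0 * (y0 * (u * v)) + (y0 * (u * v)) * w0 ∈ sffL 𝒜 I U := by
          have := sff_mem_L 𝒜 I U (i := 1) (j := 1) hw0U hw01 hyuvI hyuv1
          rwa [sff_sbr11] at this
        have hgen0 : w0 * (y0 * (u * v)) + (y0 * (u * v)) * w0 ∈ 𝒜 0 :=
          add_mem (sff_mul_mem 𝒜 hw01 hyuv1 (by decide)) (sff_mul_mem 𝒜 hyuv1 hw01 (by decide))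
        have hid : w0 * (y0 * (u * v)) + (y0 * (u * v)) * w0
            = (w0 * y0 + y0 * w0) * (u * v) := by
          have c1 : w0 * (y0 * (u * v)) = (w0 * y0) * (u * v) := (mul_assoc _ _ _).symm
          have c2 : (y0 * (u * v)) * w0 = (y0 * w0) * (u * v) := by
            have hw0u : w0 * u = u * w0 := hUcomm w0 u hw0U hw01 hu hu1
            have hw0v : w0 * v = v * w0 := hUcomm w0 v hw0U hw01 hv hv1
            calc (y0 * (u * v)) * w0 = y0 * (u * (v * w0)) := by simp only [mul_assoc]
            _ = y0 * (u * (w0 * v)) := by rw [hw0v]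
            _ = y0 * ((u * w0) * v) := by rw [← mul_assoc u w0 v]
            _ = y0 * ((w0 * u) * v) := by rw [hw0u]
            _ = (y0 * w0) * (u * v) := by simp only [mul_assoc]
          rw [c1, c2, ← add_mul]
        rw [hid] at hgenL hgen0
        have hZ2 := sff_G2 𝒜 I U hprime hIne hU0 hUI hyp heL he0 hgenL hgen0
        have hassoc : (w0 * y0 + y0 * w0) * ((w0 * y0 + y0 * w0) * (u * v))
            = ((w0 * y0 + y0 * w0) * (w0 * y0 + y0 * w0)) * (u * v) := (mul_assoc _ _ _).symm
        rw [hassoc] at hZ2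
        have huv0 : u * v ∈ 𝒜 0 := sff_mul_mem 𝒜 hu1 hv1 (by decide)
        refine ⟨huv0, fun t => ?_⟩
        have h1 : ((w0 * y0 + y0 * w0) * (w0 * y0 + y0 * w0)) * ((u * v) * t)
            = ((w0 * y0 + y0 * w0) * (w0 * y0 + y0 * w0)) * (t * (u * v)) := by
          calc ((w0 * y0 + y0 * w0) * (w0 * y0 + y0 * w0)) * ((u * v) * t)
              = (((w0 * y0 + y0 * w0) * (w0 * y0 + y0 * w0)) * (u * v)) * t :=
                (mul_assoc _ _ _).symm
          _ = t * (((w0 * y0 + y0 * w0) * (w0 * y0 + y0 * w0)) * (u * v)) := hZ2.2 t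
          _ = (t * ((w0 * y0 + y0 * w0) * (w0 * y0 + y0 * w0))) * (u * v) :=
                (mul_assoc _ _ _).symm
          _ = (((w0 * y0 + y0 * w0) * (w0 * y0 + y0 * w0)) * t) * (u * v) := by
                rw [← hzZ.2 t]
          _ = ((w0 * y0 + y0 * w0) * (w0 * y0 + y0 * w0)) * (t * (u * v)) := mul_assoc _ _ _
        have h2 := sff_z_nzd 𝒜 hprime hzZ hzne
          (show ((w0 * y0 + y0 * w0) * (w0 * y0 + y0 * w0)) * ((u * v) * t - t * (u * v)) = 0
            by rw [mul_sub, h1, sub_self])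
        exact sub_eq_zero.mp h2
      by_cases hall : ∀ u v : A, u ∈ U → u ∈ 𝒜 1 → v ∈ U → v ∈ 𝒜 1 → u * v = 0
      · exact Or.inl hall
      right
      push_neg at hall
      obtain ⟨u, v, hu, hu1, hv, hv1, hPne⟩ := hall
      have hPZ : u * v ∈ evenCenter 𝒜 := hUU u v hu hu1 hv hv1
      have huv : u * v = v * u := hUcomm u v hu hu1 hv hv1
      have hzuZ : u * u ∈ evenCenter 𝒜 := hUU u u hu hu1 hu hu1
      have hzvZ : v * v ∈ evenCenter 𝒜 := hUU v v hv hv1 hv hv1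
      have hPP : (u * v) * (u * v) = (u * u) * (v * v) := by
        calc (u * v) * (u * v) = u * ((v * u) * v) := by simp only [mul_assoc]
        _ = u * ((u * v) * v) := by rw [← huv]
        _ = (u * u) * (v * v) := by simp only [mul_assoc]
      have hPnz : ∀ m : A, (u * v) * m = 0 → m = 0 := fun m hm =>
        sff_z_nzd 𝒜 hprime hPZ hPne hm
      have hzu_ne : u * u ≠ 0 := by
        intro h0
        exact hPne (hPnz (u * v) (by rw [hPP, h0, zero_mul]))
      have hzv_ne : v * v ≠ 0 := by
        intro h0
        exact hPne (hPnz (u * v) (by rw [hPP, h0, mul_zero]))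
      have hwu : ∀ y ∈ I.carrier, y ∈ 𝒜 0 → u * (u * y - y * u) ∈ evenCenter 𝒜 := by
        intro y hy hy0
        have hpL : u * y - y * u ∈ sffL 𝒜 I U := by
          have := sff_mem_L 𝒜 I U (i := 1) (j := 0) hu hu1 hy hy0
          rwa [sff_sbr10] at this
        have hp1 : u * y - y * u ∈ 𝒜 1 :=
          sub_mem (sff_mul_mem 𝒜 hu1 hy0 (by decide)) (sff_mul_mem 𝒜 hy0 hu1 (by decide))
        exact hUU u _ hu hu1 (sff_L_sub_U 𝒜 I U hUI _ hpL) hp1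
      have hucen : ∀ t, u * t = t * u :=
        sff_central_pkg 𝒜 I hprime hIne hu1 hzuZ hzu_ne hwu
      have hwv : ∀ y ∈ I.carrier, y ∈ 𝒜 0 → v * (v * y - y * v) ∈ evenCenter 𝒜 := by
        intro y hy hy0
        have hpL : v * y - y * v ∈ sffL 𝒜 I U := by
          have := sff_mem_L 𝒜 I U (i := 1) (j := 0) hv hv1 hy hy0
          rwa [sff_sbr10] at this
        have hp1 : v * y - y * v ∈ 𝒜 1 :=
          sub_mem (sff_mul_mem 𝒜 hv1 hy0 (by decide)) (sff_mul_mem 𝒜 hy0 hv1 (by decide))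
        exact hUU v _ hv hv1 (sff_L_sub_U 𝒜 I U hUI _ hpL) hp1
      have hvcen : ∀ t, v * t = t * v :=
        sff_central_pkg 𝒜 I hprime hIne hv1 hzvZ hzv_ne hwv
      have hunz : ∀ m : A, u * m = 0 → m = 0 := by
        intro m hm
        refine hPnz m ?_
        rw [huv, mul_assoc, hm, mul_zero]
      -- I₁ I₁ ⊆ Z
      have hIIZ : ∀ y1 ∈ I.carrier, y1 ∈ 𝒜 1 → ∀ x1 ∈ I.carrier, x1 ∈ 𝒜 1 →
          y1 * x1 ∈ evenCenter 𝒜 := by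
        intro y1 hy1I hy11 x1 hx1I hx11
        have heuL : u * y1 + y1 * u ∈ sffL 𝒜 I U := by
          have := sff_mem_L 𝒜 I U (i := 1) (j := 1) hu hu1 hy1I hy11
          rwa [sff_sbr11] at this
        have heu0 : u * y1 + y1 * u ∈ 𝒜 0 :=
          add_mem (sff_mul_mem 𝒜 hu1 hy11 (by decide)) (sff_mul_mem 𝒜 hy11 hu1 (by decide))
        have hevL : v * x1 + x1 * v ∈ sffL 𝒜 I U := by
          have := sff_mem_L 𝒜 I U (i := 1) (j := 1) hv hv1 hx1I hx11
          rwa [sff_sbr11] at this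
        have hev0 : v * x1 + x1 * v ∈ 𝒜 0 :=
          add_mem (sff_mul_mem 𝒜 hv1 hx11 (by decide)) (sff_mul_mem 𝒜 hx11 hv1 (by decide))
        have hZ := sff_G2 𝒜 I U hprime hIne hU0 hUI hyp heuL heu0 hevL hev0
        have t1 : (u * y1) * (v * x1) = (u * v) * (y1 * x1) := by
          calc (u * y1) * (v * x1) = u * ((y1 * v) * x1) := by simp only [mul_assoc]
          _ = u * ((v * y1) * x1) := by rw [← hvcen y1]
          _ = (u * v) * (y1 * x1) := by simp only [mul_assoc]
        have t2 : (u * y1) * (x1 * v) = (u * v) * (y1 * x1) := by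
          calc (u * y1) * (x1 * v) = u * ((y1 * x1) * v) := by simp only [mul_assoc]
          _ = u * (v * (y1 * x1)) := by rw [← hvcen (y1 * x1)]
          _ = (u * v) * (y1 * x1) := (mul_assoc _ _ _).symm
        have t3 : (y1 * u) * (v * x1) = (u * v) * (y1 * x1) := by
          rw [← hucen y1]; exact t1
        have t4 : (y1 * u) * (x1 * v) = (u * v) * (y1 * x1) := by
          rw [← hucen y1]; exact t2
        have hval : (u * y1 + y1 * u) * (v * x1 + x1 * v)
            = (u * v) * (y1 * x1) + (u * v) * (y1 * x1)
              + ((u * v) * (y1 * x1) + (u * v) * (y1 * x1)) := by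
          calc (u * y1 + y1 * u) * (v * x1 + x1 * v)
              = (u * y1) * (v * x1) + (u * y1) * (x1 * v)
                + ((y1 * u) * (v * x1) + (y1 * u) * (x1 * v)) := by noncomm_ring
          _ = _ := by rw [t1, t2, t3, t4]
        rw [hval] at hZ
        have hquarter : ∀ q : A, q + q + (q + q) ∈ evenCenter 𝒜 → q ∈ evenCenter 𝒜 := by
          intro q hq
          have h1 : q + q + (q + q) = (2:φ) • ((2:φ) • q) := by
            rw [two_smul, two_smul]
          rw [h1] at hq
          have h2 := sff_ec_smul 𝒜 (⅟(2:φ)) hq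
          rw [smul_smul, invOf_mul_self, one_smul] at h2
          have h3 := sff_ec_smul 𝒜 (⅟(2:φ)) h2
          rw [smul_smul, invOf_mul_self, one_smul] at h3
          exact h3
        have hPmZ : (u * v) * (y1 * x1) ∈ evenCenter 𝒜 := hquarter _ hZ
        have hm0 : y1 * x1 ∈ 𝒜 0 := sff_mul_mem 𝒜 hy11 hx11 (by decide)
        refine ⟨hm0, fun t => ?_⟩
        have h1 : (u * v) * ((y1 * x1) * t) = (u * v) * (t * (y1 * x1)) := by
          calc (u * v) * ((y1 * x1) * t) = ((u * v) * (y1 * x1)) * t := (mul_assoc _ _ _).symm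
          _ = t * ((u * v) * (y1 * x1)) := hPmZ.2 t
          _ = (t * (u * v)) * (y1 * x1) := (mul_assoc _ _ _).symm
          _ = ((u * v) * t) * (y1 * x1) := by rw [← hPZ.2 t]
          _ = (u * v) * (t * (y1 * x1)) := mul_assoc _ _ _
        have h2 := hPnz ((y1 * x1) * t - t * (y1 * x1)) (by rw [mul_sub, h1, sub_self])
        exact sub_eq_zero.mp h2
      -- I₁ I₁ ≠ 0
      by_cases hII : ∀ y1 ∈ I.carrier, y1 ∈ 𝒜 1 → ∀ x1 ∈ I.carrier, x1 ∈ 𝒜 1 → y1 * x1 = 0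
      · exfalso
        have hpiece : ∀ (i j : ZMod 2) (a' b' : A), a' ∈ I.carrier → a' ∈ 𝒜 i →
            b' ∈ I.carrier → b' ∈ 𝒜 j → a' * b' = 0 := by
          intro i j a' b' haI hai hbI hbj
          rcases sff_zmod2 i with rfl | rfl <;> rcases sff_zmod2 j with rfl | rfl
          · have h1 : u * a' ∈ I.carrier := I.mul_mem_left u a' haI
            have h2 : u * a' ∈ 𝒜 1 := sff_mul_mem 𝒜 hu1 hai (by decide)
            have h3 : u * b' ∈ I.carrier := I.mul_mem_left u b' hbI
            have h4 : u * b' ∈ 𝒜 1 := sff_mul_mem 𝒜 hu1 hbj (by decide)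
            have h5 : (u * a') * (u * b') = 0 := hII _ h1 h2 _ h3 h4
            have h6 : (u * a') * (u * b') = u * (u * (a' * b')) := by
              calc (u * a') * (u * b') = u * ((a' * u) * b') := by simp only [mul_assoc]
              _ = u * ((u * a') * b') := by rw [← hucen a']
              _ = u * (u * (a' * b')) := by simp only [mul_assoc]
            exact hunz _ (hunz _ (by rw [← h6, h5]))
          · have h1 : u * a' ∈ I.carrier := I.mul_mem_left u a' haI
            have h2 : u * a' ∈ 𝒜 1 := sff_mul_mem 𝒜 hu1 hai (by decide)
            have h5 : (u * a') * b' = 0 := hII _ h1 h2 _ hbI hbj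
            exact hunz _ (by rw [← mul_assoc, h5])
          · have h3 : u * b' ∈ I.carrier := I.mul_mem_left u b' hbI
            have h4 : u * b' ∈ 𝒜 1 := sff_mul_mem 𝒜 hu1 hbj (by decide)
            have h5 : a' * (u * b') = 0 := hII _ haI hai _ h3 h4
            have h6 : a' * (u * b') = u * (a' * b') := by
              rw [← mul_assoc, ← hucen a', mul_assoc]
            exact hunz _ (by rw [← h6, h5])
          · exact hII _ haI hai _ hbI hbj
        have hprod : ∀ a ∈ I.carrier, ∀ b ∈ I.carrier, a * b = 0 := by
          intro a haI b hbI
          calc a * b = (((decompose 𝒜 a) 0 : A) + ((decompose 𝒜 a) 1 : A))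
              * (((decompose 𝒜 b) 0 : A) + ((decompose 𝒜 b) 1 : A)) := by
                rw [← sff_decomp_two 𝒜 a, ← sff_decomp_two 𝒜 b]
          _ = ((decompose 𝒜 a) 0 : A) * ((decompose 𝒜 b) 0 : A)
              + ((decompose 𝒜 a) 0 : A) * ((decompose 𝒜 b) 1 : A)
              + (((decompose 𝒜 a) 1 : A) * ((decompose 𝒜 b) 0 : A)
              + ((decompose 𝒜 a) 1 : A) * ((decompose 𝒜 b) 1 : A)) := by noncomm_ring
          _ = 0 := by
              rw [hpiece 0 0 _ _ (I.graded' 0 a haI) (SetLike.coe_mem _)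
                  (I.graded' 0 b hbI) (SetLike.coe_mem _),
                hpiece 0 1 _ _ (I.graded' 0 a haI) (SetLike.coe_mem _)
                  (I.graded' 1 b hbI) (SetLike.coe_mem _),
                hpiece 1 0 _ _ (I.graded' 1 a haI) (SetLike.coe_mem _)
                  (I.graded' 0 b hbI) (SetLike.coe_mem _),
                hpiece 1 1 _ _ (I.graded' 1 a haI) (SetLike.coe_mem _)
                  (I.graded' 1 b hbI) (SetLike.coe_mem _)]
              simp
        rcases hprime I I hprod with h | h <;> exact hIne h
      push_neg at hII
      obtain ⟨y1, hy1I, hy11, x1, hx1I, hx11, hz0ne⟩ := hII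
      have hz0Z : y1 * x1 ∈ evenCenter 𝒜 := hIIZ y1 hy1I hy11 x1 hx1I hx11
      have hA0 : ∀ t ∈ 𝒜 0, ∀ s : A, t * s = s * t := by
        intro t ht s
        have hx1tI : x1 * t ∈ I.carrier := I.mul_mem_right t x1 hx1I
        have hx1t1 : x1 * t ∈ 𝒜 1 := sff_mul_mem 𝒜 hx11 ht (by decide)
        have hZ := hIIZ y1 hy1I hy11 (x1 * t) hx1tI hx1t1
        have he : y1 * (x1 * t) = (y1 * x1) * t := (mul_assoc _ _ _).symm
        rw [he] at hZ
        have h1 : (y1 * x1) * (t * s) = (y1 * x1) * (s * t) := by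
          calc (y1 * x1) * (t * s) = ((y1 * x1) * t) * s := (mul_assoc _ _ _).symm
          _ = s * ((y1 * x1) * t) := hZ.2 s
          _ = (s * (y1 * x1)) * t := (mul_assoc _ _ _).symm
          _ = ((y1 * x1) * s) * t := by rw [← hz0Z.2 s]
          _ = (y1 * x1) * (s * t) := mul_assoc _ _ _
        have h2 := sff_z_nzd 𝒜 hprime hz0Z hz0ne
          (show (y1 * x1) * (t * s - s * t) = 0 by rw [mul_sub, h1, sub_self])
        exact sub_eq_zero.mp h2
      have hA11 : ∀ s ∈ 𝒜 1, ∀ t ∈ 𝒜 1, s * t = t * s := by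
        intro s hs t ht
        refine sub_eq_zero.mp (hunz _ (show u * (s * t - t * s) = 0 from ?_))
        have h1 : u * (s * t) = u * (t * s) := by
          calc u * (s * t) = (u * s) * t := (mul_assoc _ _ _).symm
          _ = t * (u * s) := hA0 (u * s) (sff_mul_mem 𝒜 hu1 hs (by decide)) t
          _ = (t * u) * s := (mul_assoc _ _ _).symm
          _ = (u * t) * s := by rw [← hucen t]
          _ = u * (t * s) := mul_assoc _ _ _
        rw [mul_sub, h1, sub_self]
      intro a b
      calc a * b = (((decompose 𝒜 a) 0 : A) + ((decompose 𝒜 a) 1 : A))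
          * (((decompose 𝒜 b) 0 : A) + ((decompose 𝒜 b) 1 : A)) := by
            rw [← sff_decomp_two 𝒜 a, ← sff_decomp_two 𝒜 b]
      _ = ((decompose 𝒜 a) 0 : A) * ((decompose 𝒜 b) 0 : A)
          + ((decompose 𝒜 a) 0 : A) * ((decompose 𝒜 b) 1 : A)
          + (((decompose 𝒜 a) 1 : A) * ((decompose 𝒜 b) 0 : A)
          + ((decompose 𝒜 a) 1 : A) * ((decompose 𝒜 b) 1 : A)) := by noncomm_ring
      _ = ((decompose 𝒜 b) 0 : A) * ((decompose 𝒜 a) 0 : A)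
          + ((decompose 𝒜 b) 1 : A) * ((decompose 𝒜 a) 0 : A)
          + (((decompose 𝒜 b) 0 : A) * ((decompose 𝒜 a) 1 : A)
          + ((decompose 𝒜 b) 1 : A) * ((decompose 𝒜 a) 1 : A)) := by
            rw [hA0 _ (SetLike.coe_mem _) ((decompose 𝒜 b) 0 : A),
              hA0 _ (SetLike.coe_mem _) ((decompose 𝒜 b) 1 : A),
              ← hA0 _ (SetLike.coe_mem _) ((decompose 𝒜 a) 1 : A),
              hA11 _ (SetLike.coe_mem _) _ (SetLike.coe_mem _)]
      _ = (((decompose 𝒜 b) 0 : A) + ((decompose 𝒜 b) 1 : A))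
          * (((decompose 𝒜 a) 0 : A) + ((decompose 𝒜 a) 1 : A)) := by noncomm_ring
      _ = b * a := by rw [← sff_decomp_two 𝒜 a, ← sff_decomp_two 𝒜 b]
  refine ⟨?_, main2⟩
  intro y hyI hy1 u v w hu hu1 hv hv1 hw hw1
  rcases main2 with hz | hcomm
  · have he : y * u * v * w = (y * u) * (v * w) := by simp only [mul_assoc]
    rw [he, hz v w hv hv1 hw hw1, mul_zero]
    exact sff_ec_zero 𝒜
  · refine ⟨?_, fun t => hcomm _ t⟩
    exact sff_mul_mem 𝒜
      (sff_mul_mem 𝒜 (sff_mul_mem 𝒜 hy1 hu1 (k := 0) (by decide)) hv1 (k := 1) (by decide))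
      hw1 (by decide)
end

section
/- Let A be a superalgebra with superinvolution * over a commutative unital ring φ with 1/2 ∈ φ, let U be a Lie ideal of K, and let ū denote the subalgebra of A generated by U. Then the φ-module spanned by [ū, A] equals the φ-module spanned by [U, A] (superbrackets of homogeneous elements); consequently, if J is an ideal of A with J ⊆ ū, then [J ∩ K, K] ⊆ U. -/
open DirectSum

variable {φ A : Type*}

/-!
Write `S` for the span of `[U, A]`. An element of `ū` splits into homogeneous components, and
each component `x` of degree `i` satisfies `[x, a] ∈ S` for all homogeneous `a`: this holds on
`U` because `U` is graded, and it passes to products by the super Leibniz rule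
`[xy, a] = [x, ya] ± [y, ax]`, whose right-hand side again brackets a factor with something in
`A`. Hence `[ū, A] = S`.

Splitting a homogeneous `a = h + k` into symmetric and skew parts (possible as `½ ∈ φ`), we
get `[u, k] ∈ U` since `U` is a Lie ideal of `K`, while `[u, h]` is symmetric; so `S ⊆ U + H`
with `H` the symmetric elements. If `x ∈ J ∩ K` and `k ∈ K`, then `[x, k] ∈ [ū, A] = S` is
skew, and a skew element of `U + H` lies in `U`, again because `2` is invertible.
-/

lemma ssign_comm (i j : ZMod 2) : ssign j i = ssign i j := by
  revert i j; decide

lemma ssign_mul_self (i j : ZMod 2) : ssign i j * ssign i j = 1 := by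
  revert i j; decide

lemma ssign_mul_ssign (p q j : ZMod 2) : ssign p (q + j) * ssign q (j + p) = ssign (p + q) j := by
  revert p q j; decide

section Superbracket

variable [CommRing φ] [Ring A] [Algebra φ A]

lemma sbr_add_left (i j : ZMod 2) (x y a : A) :
    sbr i j (x + y) a = sbr i j x a + sbr i j y a := by
  simp only [sbr, add_mul, mul_add, smul_add]; abel

lemma sbr_add_right (i j : ZMod 2) (x a b : A) :
    sbr i j x (a + b) = sbr i j x a + sbr i j x b := by
  simp only [sbr, add_mul, mul_add, smul_add]; abel

lemma sbr_smul_left (i j : ZMod 2) (c : φ) (x a : A) :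
    sbr i j (c • x) a = c • sbr i j x a := by
  simp only [sbr, smul_mul_assoc, mul_smul_comm, smul_sub, smul_comm c]

lemma sbr_mul_left (p q j : ZMod 2) (x y a : A) :
    sbr (p + q) j (x * y) a
      = sbr p (q + j) x (y * a) + ssign p (q + j) • sbr q (j + p) y (a * x) := by
  simp only [sbr, smul_sub, smul_smul, ssign_mul_ssign, mul_assoc]
  abel

end Superbracket

section Graded

variable [CommRing φ] [Ring A] [Algebra φ A] (𝒜 : ZMod 2 → Submodule φ A)

lemma sbr_mem_superBrSpan {S T : Set A} {i j : ZMod 2} {x y : A} (hxS : x ∈ S) (hx : x ∈ 𝒜 i)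
    (hyT : y ∈ T) (hy : y ∈ 𝒜 j) : sbr i j x y ∈ superBrSpan 𝒜 S T :=
  Submodule.subset_span ⟨i, j, x, y, hxS, hx, hyT, hy, rfl⟩

lemma sbr_mul_mem [SetLike.GradedMonoid 𝒜] {S : Submodule φ A} {p q i : ZMod 2}
    (hpq : p + q = i) {x y : A} (hx : x ∈ 𝒜 p) (hy : y ∈ 𝒜 q)
    (hxS : ∀ j, ∀ a ∈ 𝒜 j, sbr p j x a ∈ S) (hyS : ∀ j, ∀ a ∈ 𝒜 j, sbr q j y a ∈ S) :
    ∀ j, ∀ a ∈ 𝒜 j, sbr i j (x * y) a ∈ S := by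
  subst hpq
  intro j a ha
  rw [sbr_mul_left]
  exact add_mem (hxS _ _ (SetLike.mul_mem_graded hy ha))
    (zsmul_mem (hyS _ _ (SetLike.mul_mem_graded ha hx)) _)

variable [GradedAlgebra 𝒜]

lemma decompose_zero_add_decompose_one (x : A) :
    (decompose 𝒜 x 0 : A) + (decompose 𝒜 x 1 : A) = x := by
  conv_rhs => rw [← (decompose 𝒜).symm_apply_apply x, ← DirectSum.sum_univ_of (decompose 𝒜 x)]
  simp only [DirectSum.decompose_symm_sum, DirectSum.decompose_symm_of]
  exact (Fin.sum_univ_two (fun i : ZMod 2 => (decompose 𝒜 x i : A))).symm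

lemma coe_decompose_mul_apply (i : ZMod 2) (x y : A) :
    (decompose 𝒜 (x * y) i : A) =
      (decompose 𝒜 x 0 : A) * decompose 𝒜 y i +
        (decompose 𝒜 x 1 : A) * decompose 𝒜 y (i + 1) := by
  conv_lhs => rw [← decompose_zero_add_decompose_one 𝒜 x, add_mul]
  rw [decompose_add, DirectSum.add_apply, Submodule.coe_add]
  congr 1
  · exact DirectSum.coe_decompose_mul_of_left_mem_zero 𝒜 (decompose 𝒜 x 0).2
  · have h_deg : (1 : ZMod 2) + (i + 1) = i := by revert i; decide
    convert DirectSum.coe_decompose_mul_add_of_left_mem 𝒜 (j := i + 1) (decompose 𝒜 x 1).2 <;>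
      exact h_deg.symm

lemma sbr_decompose_mem_superBrSpan_of_mem_adjoin {M : Submodule φ A}
    (hM : SetLike.IsHomogeneous 𝒜 M) {x : A} (hx : x ∈ NonUnitalAlgebra.adjoin φ (M : Set A)) :
    ∀ i j, ∀ a ∈ 𝒜 j, sbr i j (decompose 𝒜 x i : A) a ∈ superBrSpan 𝒜 (M : Set A) Set.univ := by
  induction hx using NonUnitalAlgebra.adjoin_induction with
  | mem u hu =>
    intro i j a ha
    exact sbr_mem_superBrSpan 𝒜 (hM i hu) (SetLike.coe_mem _) trivial ha
  | zero =>
    intro i j a _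
    simp [sbr]
  | add x y _ _ hx hy =>
    intro i j a ha
    rw [decompose_add, DirectSum.add_apply, Submodule.coe_add, sbr_add_left]
    exact add_mem (hx i j a ha) (hy i j a ha)
  | smul c x _ hx =>
    intro i j a ha
    rw [decompose_smul, DirectSum.smul_apply, Submodule.coe_smul, sbr_smul_left]
    exact Submodule.smul_mem _ c (hx i j a ha)
  | mul x y _ _ hx hy =>
    intro i
    have h_deg : (1 : ZMod 2) + (i + 1) = i := by revert i; decide
    have hx0 := sbr_mul_mem 𝒜 (zero_add i) (SetLike.coe_mem _) (SetLike.coe_mem _) (hx 0) (hy i)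
    have hx1 := sbr_mul_mem 𝒜 h_deg (SetLike.coe_mem _) (SetLike.coe_mem _) (hx 1) (hy (i + 1))
    intro j a ha
    rw [coe_decompose_mul_apply, sbr_add_left]
    exact add_mem (hx0 j a ha) (hx1 j a ha)

theorem superBrSpan_adjoin_eq {M : Submodule φ A} (hM : SetLike.IsHomogeneous 𝒜 M) :
    superBrSpan 𝒜 (NonUnitalAlgebra.adjoin φ (M : Set A) : Set A) Set.univ =
      superBrSpan 𝒜 (M : Set A) Set.univ := by
  refine le_antisymm (Submodule.span_le.2 ?_) (Submodule.span_mono ?_)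
  · rintro _ ⟨i, j, x, a, hxM, hx, -, ha, rfl⟩
    simpa only [decompose_of_mem_same 𝒜 hx, SetLike.mem_coe] using
      sbr_decompose_mem_superBrSpan_of_mem_adjoin 𝒜 hM hxM i j a ha
  · rintro _ ⟨i, j, x, a, hxM, hx, -, ha, rfl⟩
    exact ⟨i, j, x, a, NonUnitalAlgebra.subset_adjoin φ hxM, hx, trivial, ha, rfl⟩

end Graded

section Superinvolution

variable [CommRing φ] [Ring A] [Algebra φ A] {𝒜 : ZMod 2 → Submodule φ A}

lemma Superinvolution.map_sbr_of_skew_of_skew (σ : Superinvolution 𝒜) {i j : ZMod 2} {x y : A}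
    (hx : x ∈ 𝒜 i) (hy : y ∈ 𝒜 j) (hσx : σ.toFun x = -x) (hσy : σ.toFun y = -y) :
    σ.toFun (sbr i j x y) = -sbr i j x y := by
  simp only [sbr, map_sub, map_zsmul, σ.mul_rev i j x hx y hy, σ.mul_rev j i y hy x hx, hσx, hσy,
    ssign_comm j i, neg_mul, mul_neg, neg_neg, smul_smul, ssign_mul_self, one_smul]
  abel

lemma Superinvolution.map_sbr_of_skew_of_symm (σ : Superinvolution 𝒜) {i j : ZMod 2} {x y : A}
    (hx : x ∈ 𝒜 i) (hy : y ∈ 𝒜 j) (hσx : σ.toFun x = -x) (hσy : σ.toFun y = y) :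
    σ.toFun (sbr i j x y) = sbr i j x y := by
  simp only [sbr, map_sub, map_zsmul, σ.mul_rev i j x hx y hy, σ.mul_rev j i y hy x hx, hσx, hσy,
    ssign_comm j i, neg_mul, mul_neg, smul_neg, smul_smul, ssign_mul_self, one_smul]
  abel

lemma Superinvolution.exists_symm_add_skew [Invertible (2 : φ)] (σ : Superinvolution 𝒜)
    {j : ZMod 2} {a : A} (ha : a ∈ 𝒜 j) :
    ∃ h k, h ∈ 𝒜 j ∧ σ.toFun h = h ∧ k ∈ 𝒜 j ∧ σ.toFun k = -k ∧ a = h + k := by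
  refine ⟨⅟(2 : φ) • (a + σ.toFun a), ⅟(2 : φ) • (a - σ.toFun a),
    Submodule.smul_mem _ _ (add_mem ha (σ.grading j a ha)), ?_,
    Submodule.smul_mem _ _ (sub_mem ha (σ.grading j a ha)), ?_, ?_⟩
  · rw [map_smul, map_add, σ.invol, add_comm]
  · rw [map_smul, map_sub, σ.invol, ← smul_neg, neg_sub]
  · rw [← smul_add, add_add_sub_cancel, ← two_smul φ, invOf_smul_smul]

lemma LieIdealOfSkew.superBrSpan_le_sup_eqLocus [Invertible (2 : φ)] [GradedAlgebra 𝒜]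
    {σ : Superinvolution 𝒜} (U : LieIdealOfSkew 𝒜 σ) :
    superBrSpan 𝒜 (U.carrier : Set A) Set.univ ≤
      U.carrier ⊔ LinearMap.eqLocus σ.toFun LinearMap.id := by
  refine Submodule.span_le.2 ?_
  rintro _ ⟨i, j, u, a, hu, hui, -, ha, rfl⟩
  obtain ⟨h, k, hh, hσh, hk, hσk, rfl⟩ := σ.exists_symm_add_skew ha
  rw [sbr_add_right]
  exact add_mem (Submodule.mem_sup_right (σ.map_sbr_of_skew_of_symm hui hh (U.skew u hu) hσh))
    (Submodule.mem_sup_left (U.bracket_mem i j u k hu hui hk hσk))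

end Superinvolution

lemma LinearMap.mem_of_mem_sup_eqLocus_of_map_eq_neg {R M : Type*} [CommRing R]
    [Invertible (2 : R)] [AddCommGroup M] [Module R M] {f : M →ₗ[R] M} {N : Submodule R M}
    (hN : ∀ x ∈ N, f x = -x) {z : M} (hz : z ∈ N ⊔ LinearMap.eqLocus f LinearMap.id)
    (hfz : f z = -z) : z ∈ N := by
  obtain ⟨u, hu, h, hh, rfl⟩ := Submodule.mem_sup.1 hz
  have hfh : f h = h := hh
  have h_two : (2 : R) • h = 0 := by
    rw [map_add, hN u hu, hfh, neg_add] at hfz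
    rw [two_smul, ← sub_neg_eq_add]
    exact sub_eq_zero.2 (add_left_cancel hfz)
  rwa [← invOf_smul_smul (2 : R) h, h_two, smul_zero, add_zero]

/-- Let `A` be a superalgebra with superinvolution over a commutative ring `φ` with `½ ∈ φ`,
`U` a Lie ideal of `K`, and `ū` the subalgebra of `A` generated by `U`. Then the `φ`-module
spanned by `[ū, A]` equals the `φ`-module spanned by `[U, A]`; consequently, if `J` is an
ideal of `A` with `J ⊆ ū`, then `[J ∩ K, K] ⊆ U`. -/
theorem bracket_span_adjoin_eq_and_ideal_bracket_in_U
    {φ A : Type*} [CommRing φ] [Invertible (2 : φ)] [Ring A] [Algebra φ A]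
    (𝒜 : ZMod 2 → Submodule φ A) [GradedAlgebra 𝒜]
    (σ : Superinvolution 𝒜) (U : LieIdealOfSkew 𝒜 σ) :
    superBrSpan 𝒜 (NonUnitalAlgebra.adjoin φ (U.carrier : Set A) : Set A) Set.univ =
      superBrSpan 𝒜 (U.carrier : Set A) Set.univ ∧
    (∀ J : SuperIdeal 𝒜,
      (J.carrier : Set A) ⊆ NonUnitalAlgebra.adjoin φ (U.carrier : Set A) →
      ∀ (i j : ZMod 2) (x k : A), x ∈ J.carrier → σ.toFun x = -x → x ∈ 𝒜 i →
        k ∈ 𝒜 j → σ.toFun k = -k → sbr i j x k ∈ U.carrier) := by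
  have h_span := superBrSpan_adjoin_eq 𝒜 U.graded'
  refine ⟨h_span, fun J hJ i j x k hxJ hσx hx hk hσk => ?_⟩
  have h_mem : sbr i j x k ∈ superBrSpan 𝒜 (U.carrier : Set A) Set.univ :=
    h_span ▸ sbr_mem_superBrSpan 𝒜 (hJ hxJ) hx trivial hk
  exact LinearMap.mem_of_mem_sup_eqLocus_of_map_eq_neg U.skew (U.superBrSpan_le_sup_eqLocus h_mem)
    (σ.map_sbr_of_skew_of_skew hx hk hσx hσk)
end
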